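/- arXiv:1512.02868 — 6 statements merged into one kernel-verified Lean document; each statement's English description precedes it below -/
import Mathlib

section
/- Assume k : (0,∞) → [0,∞) satisfies condition (k) and let Ω ⊂ ℝ^N be an open set. Then for every u ∈ D^J(Ω) one has J(u,u) ≥ ∫_Ω u(x)² κ_Ω(x) dx, and consequently Λ₁(Ω) ≥ inf_{x∈Ω} κ_Ω(x). -/
open MeasureTheory Metric Set Filter
open scoped ENNReal RealInnerProductSpace

noncomputable section

abbrev Euc (N : ℕ) := EuclideanSpace ℝ (Fin N)

variable {N : ℕ}

/-- Condition (k) on the kernel `k`. -/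
def KCond (N : ℕ) (k : ℝ → ℝ) : Prop :=
  (∀ r : ℝ, 0 < r → 0 ≤ k r) ∧ AntitoneOn k (Set.Ioi 0) ∧
  (∃ r₀ > 0, StrictAntiOn k (Set.Ioo 0 r₀)) ∧
  IntegrableOn (fun r : ℝ => min 1 (r ^ 2) * k r * r ^ (N - 1)) (Set.Ioi 0) ∧
  ¬ IntegrableOn (fun r : ℝ => k r * r ^ (N - 1)) (Set.Ioi 0)

/-- `ρ(v,U')`. -/
def rhoE (k : ℝ → ℝ) (U : Set (Euc N)) (v : Euc N → ℝ) : ℝ≥0∞ :=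
  ∫⁻ x in U, ∫⁻ y in U, ENNReal.ofReal ((v x - v y) ^ 2 * k (dist x y))

/-- `J(v,v)` as an extended-real energy. -/
def jEnergy (k : ℝ → ℝ) (v : Euc N → ℝ) : ℝ≥0∞ :=
  (1 / 2) * ∫⁻ x, ∫⁻ y, ENNReal.ofReal ((v x - v y) ^ 2 * k (dist x y))

/-- The bilinear form `J(v,w)`. -/
def jForm (k : ℝ → ℝ) (v w : Euc N → ℝ) : ℝ :=
  (1 / 2) * ∫ x, ∫ y, (v x - v y) * (w x - w y) * k (dist x y)

/-- The space `D^J(Ω)`. -/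
def memDJ (k : ℝ → ℝ) (Ω : Set (Euc N)) (u : Euc N → ℝ) : Prop :=
  MemLp u 2 (volume : Measure (Euc N)) ∧ jEnergy k u < ⊤ ∧
    ∀ᵐ x : Euc N, x ∉ Ω → u x = 0

/-- The space `V^J(U')`. -/
def memVJ (k : ℝ → ℝ) (U' : Set (Euc N)) (v : Euc N → ℝ) : Prop :=
  (∃ v₁ v₂ : Euc N → ℝ, v = v₁ + v₂ ∧ MemLp v₁ 2 (volume : Measure (Euc N)) ∧
      MemLp v₂ ⊤ (volume : Measure (Euc N))) ∧ rhoE k U' v < ⊤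

/-- `κ_Ω(x) = ∫_{ℝ^N∖Ω} k(|x−y|) dy`. -/
def kappaSet (k : ℝ → ℝ) (Ω : Set (Euc N)) (x : Euc N) : ℝ≥0∞ :=
  ∫⁻ y in Ωᶜ, ENNReal.ofReal (k (dist x y))

/-- `Λ₁(Ω)`. -/
def lambda1 (k : ℝ → ℝ) (Ω : Set (Euc N)) : ℝ≥0∞ :=
  ⨅ (u : Euc N → ℝ) (_ : memDJ k Ω u) (_ : ¬ (∀ᵐ x : Euc N, u x = 0)),
    jEnergy k u / ∫⁻ x in Ω, ENNReal.ofReal ((u x) ^ 2)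

/-- The open affine half space `{x : ⟪x,e⟫ > l}`. -/
def halfSp (e : Euc N) (l : ℝ) : Set (Euc N) := {x | l < ⟪x, e⟫}

/-- Reflection across the hyperplane `{x : ⟪x,e⟫ = l}` (for a unit vector `e`). -/
def reflSp (e : Euc N) (l : ℝ) (x : Euc N) : Euc N := x + (2 * (l - ⟪x, e⟫)) • e

/-- Antisymmetric supersolution of `Iv = c(x) v` in `U`, `v ≡ 0` on `H∖U`. -/
def AntiSuperSol (k : ℝ → ℝ) (e : Euc N) (l : ℝ) (U : Set (Euc N))
    (c : Euc N → ℝ) (v : Euc N → ℝ) : Prop :=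
  (∀ x, v (reflSp e l x) = - v x) ∧
  (∃ U' : Set (Euc N), IsOpen U' ∧ reflSp e l '' U' = U' ∧ closure U ⊆ U' ∧ memVJ k U' v) ∧
  (∀ᵐ x : Euc N, x ∈ halfSp e l \ U → 0 ≤ v x) ∧
  (∀ ε > 0, ∃ R : ℝ, ∀ x ∈ halfSp e l, R ≤ ‖x‖ → -ε ≤ v x) ∧
  (∀ φ : Euc N → ℝ, memDJ k U φ → HasCompactSupport φ → (∀ x, 0 ≤ φ x) →
    ∫ x in U, c x * v x * φ x ≤ jForm k v φ)

/-- A set is radial if membership only depends on the norm. -/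
def IsRadialSet (Ω : Set (Euc N)) : Prop :=
  ∀ x y : Euc N, ‖x‖ = ‖y‖ → (x ∈ Ω ↔ y ∈ Ω)

/-- `u` is foliated Schwarz symmetric on `Ω` (w.r.t. some unit vector `p`). -/
def FoliatedSchwarz (Ω : Set (Euc N)) (u : Euc N → ℝ) : Prop :=
  ∃ p : Euc N, ‖p‖ = 1 ∧ ∀ r : ℝ, 0 < r → sphere (0 : Euc N) r ⊆ Ω → ∀ c : ℝ,
    {x ∈ sphere (0 : Euc N) r | c ≤ u x} = sphere (0 : Euc N) r ∨
    ∃ t : ℝ, {x ∈ sphere (0 : Euc N) r | c ≤ u x}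
      = {x ∈ sphere (0 : Euc N) r | dist x (r • p) ≤ t}

/-- Condition (U1). -/
def CondU1 (u : Euc N → ℝ) : Prop :=
  ∃ e : Euc N, ‖e‖ = 1 ∧ (∀ x ∈ halfSp e 0, u (reflSp e 0 x) ≤ u x) ∧
    ∃ x ∈ halfSp e 0, u (reflSp e 0 x) ≠ u x

/-- Condition (F1). -/
def CondF1 (f : ℝ → ℝ → ℝ) : Prop :=
  ∀ K > 0, ∃ L > 0, ∀ r : ℝ, 0 ≤ r → ∀ a ∈ Set.Icc (-K) K, ∀ b ∈ Set.Icc (-K) K,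
    |f r a - f r b| ≤ L * |a - b|

/-- Condition (F2). -/
def CondF2 (f : ℝ → ℝ → ℝ) : Prop :=
  (∀ r : ℝ, 0 ≤ r → f r 0 = 0) ∧
  ∃ δ > 0, ∀ r : ℝ, 0 ≤ r → ∀ a : ℝ, a ≠ 0 → |a| ≤ δ → f r a / a ≤ 0

/-- Weak solution of `Iu = f(|x|,u)` in `Ω`, `u ≡ 0` on `ℝ^N∖Ω`. -/
def IsWeakSol (k : ℝ → ℝ) (Ω : Set (Euc N)) (f : ℝ → ℝ → ℝ) (u : Euc N → ℝ) : Prop :=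
  memDJ k Ω u ∧ ∀ φ : Euc N → ℝ, memDJ k Ω φ → HasCompactSupport φ →
    IntegrableOn (fun x => f ‖x‖ (u x) * φ x) Ω ∧
    jForm k u φ = ∫ x in Ω, f ‖x‖ (u x) * φ x

/-- `u` is a bounded function. -/
def IsBoundedFun (u : Euc N → ℝ) : Prop := ∃ M : ℝ, ∀ x, |u x| ≤ M

/-
Write the energy as `J(u,u) = ½ ∫∫ (u x - u y)² k(|x - y|)`. Since `u` vanishes off `Ω`, the part of
the double integral over `Ω × Ωᶜ` is exactly `∫_Ω u(x)² κ_Ω(x) dx`, and by symmetry of the integrand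
the part over `Ωᶜ × Ω` is the same number; dropping the (nonnegative) rest gives the first claim.
The bound on `Λ₁(Ω)` follows by estimating `κ_Ω` from below by its infimum over `Ω`.
-/

/- Extending by `⊤` makes the kernel globally antitone, hence measurable, while the diagonal
`x = y`, the only place where `dist x y ≤ 0`, is still killed by the factor `(u x - u y) ^ 2 = 0`. -/
def kernelExt (k : ℝ → ℝ) : ℝ → ℝ≥0∞ := fun r => if 0 < r then ENNReal.ofReal (k r) else ⊤

theorem antitone_kernelExt {k : ℝ → ℝ} (hk : AntitoneOn k (Ioi 0)) : Antitone (kernelExt k) := by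
  intro a b hab
  by_cases ha : 0 < a
  · have hb : 0 < b := ha.trans_le hab
    simpa only [kernelExt, if_pos ha, if_pos hb] using ENNReal.ofReal_le_ofReal (hk ha hb hab)
  · simp [kernelExt, if_neg ha]

theorem ofReal_sq_mul_eq_mul_kernelExt {k : ℝ → ℝ} (u : Euc N → ℝ) (x y : Euc N) :
    ENNReal.ofReal ((u x - u y) ^ 2 * k (dist x y))
      = ENNReal.ofReal ((u x - u y) ^ 2) * kernelExt k (dist x y) := by
  obtain rfl | hxy := eq_or_ne x y
  · simp
  · rw [ENNReal.ofReal_mul (sq_nonneg _)]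
    simp [kernelExt, dist_pos.2 hxy]

theorem kappaSet_eq_setLIntegral_kernelExt {k : ℝ → ℝ} {Ω : Set (Euc N)} (hΩ : MeasurableSet Ω)
    {x : Euc N} (hx : x ∈ Ω) :
    kappaSet k Ω x = ∫⁻ y in Ωᶜ, kernelExt k (dist x y) := by
  refine setLIntegral_congr_fun hΩ.compl fun y hy => ?_
  have hxy : x ≠ y := by rintro rfl; exact hy hx
  simp [kernelExt, dist_pos.2 hxy]

theorem two_mul_lintegral_restrict_compl_le {α : Type*} [MeasurableSpace α] {μ : Measure α}
    [SFinite μ] {f : α → α → ℝ≥0∞} (hf : AEMeasurable (Function.uncurry f) (μ.prod μ))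
    (hsymm : ∀ x y, f x y = f y x) {s : Set α} (hs : MeasurableSet s) :
    2 * ∫⁻ x in s, ∫⁻ y in sᶜ, f x y ∂μ ∂μ ≤ ∫⁻ x, ∫⁻ y, f x y ∂μ ∂μ := by
  have hswap : ∫⁻ x in s, ∫⁻ y in sᶜ, f x y ∂μ ∂μ = ∫⁻ x in sᶜ, ∫⁻ y in s, f x y ∂μ ∂μ := by
    rw [lintegral_lintegral_swap (by rw [Measure.prod_restrict]; exact hf.restrict)]
    simp only [hsymm]
  calc 2 * ∫⁻ x in s, ∫⁻ y in sᶜ, f x y ∂μ ∂μ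
      = ∫⁻ x in s, ∫⁻ y in sᶜ, f x y ∂μ ∂μ + ∫⁻ x in sᶜ, ∫⁻ y in s, f x y ∂μ ∂μ := by
        rw [two_mul, hswap]
    _ ≤ ∫⁻ x in s, ∫⁻ y, f x y ∂μ ∂μ + ∫⁻ x in sᶜ, ∫⁻ y, f x y ∂μ ∂μ :=
        add_le_add (lintegral_mono fun x => setLIntegral_le_lintegral _ _)
          (lintegral_mono fun x => setLIntegral_le_lintegral _ _)
    _ = ∫⁻ x, ∫⁻ y, f x y ∂μ ∂μ := lintegral_add_compl _ hs

theorem lintegral_sq_mul_kappaSet_le_jEnergy {k : ℝ → ℝ} (hk : AntitoneOn k (Ioi 0))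
    {Ω : Set (Euc N)} (hΩ : MeasurableSet Ω) {u : Euc N → ℝ} (hu : AEMeasurable u)
    (hu0 : ∀ᵐ x, x ∉ Ω → u x = 0) :
    ∫⁻ x in Ω, ENNReal.ofReal (u x ^ 2) * kappaSet k Ω x ≤ jEnergy k u := by
  set F : Euc N → Euc N → ℝ≥0∞ :=
    fun x y => ENNReal.ofReal ((u x - u y) ^ 2) * kernelExt k (dist x y)
  have hF : AEMeasurable (Function.uncurry F) (volume.prod volume) :=
    (((hu.comp_fst.sub hu.comp_snd).pow_const 2).ennreal_ofReal).mul
      ((antitone_kernelExt hk).measurable.comp continuous_dist.measurable).aemeasurable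
  have hFsymm : ∀ x y, F x y = F y x := fun x y => by
    simp only [F, dist_comm, ← neg_sub (u x), neg_sq]
  have hlhs : ∫⁻ x in Ω, ENNReal.ofReal (u x ^ 2) * kappaSet k Ω x
      = ∫⁻ x in Ω, ∫⁻ y in Ωᶜ, F x y := by
    refine setLIntegral_congr_fun hΩ fun x hx => ?_
    rw [kappaSet_eq_setLIntegral_kernelExt hΩ hx, ← lintegral_const_mul' _ _ ENNReal.ofReal_ne_top]
    refine setLIntegral_congr_fun_ae hΩ.compl ?_
    filter_upwards [hu0] with y hy hyΩ
    simp [F, hy hyΩ]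
  have hJ : jEnergy k u = 2⁻¹ * ∫⁻ x, ∫⁻ y, F x y := by
    simp only [jEnergy, one_div, F, ofReal_sq_mul_eq_mul_kernelExt]
  rw [hlhs, hJ, ← ENNReal.mul_le_iff_le_inv two_ne_zero ENNReal.ofNat_ne_top]
  exact two_mul_lintegral_restrict_compl_le hF hFsymm hΩ

theorem setLIntegral_ofReal_sq_ne_zero {α : Type*} [MeasurableSpace α] {μ : Measure α}
    {s : Set α} (hs : MeasurableSet s) {u : α → ℝ} (hu : AEMeasurable u μ)
    (hu0 : ∀ᵐ x ∂μ, x ∉ s → u x = 0) (hne : ¬ ∀ᵐ x ∂μ, u x = 0) :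
    ∫⁻ x in s, ENNReal.ofReal (u x ^ 2) ∂μ ≠ 0 := by
  refine fun h => hne ?_
  have hus : ∀ᵐ x ∂μ, x ∈ s → u x = 0 := by
    refine (ae_restrict_iff' hs).1 ?_
    filter_upwards [(lintegral_eq_zero_iff' (hu.pow_const 2).ennreal_ofReal.restrict).1 h]
      with x hx
    simpa using hx
  filter_upwards [hus, hu0] with x hxs hxsc
  by_cases hx : x ∈ s
  exacts [hxs hx, hxsc hx]

theorem iInf_kappaSet_le_lambda1 {k : ℝ → ℝ} (hk : AntitoneOn k (Ioi 0)) {Ω : Set (Euc N)}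
    (hΩ : MeasurableSet Ω) : (⨅ x ∈ Ω, kappaSet k Ω x) ≤ lambda1 k Ω := by
  refine le_iInf₂ fun u hu => le_iInf fun hne => ?_
  have hu_meas : AEMeasurable u := hu.1.aestronglyMeasurable.aemeasurable
  rw [ENNReal.le_div_iff_mul_le (.inl (setLIntegral_ofReal_sq_ne_zero hΩ hu_meas hu.2.2 hne))
    (.inr hu.2.1.ne), mul_comm]
  calc (∫⁻ x in Ω, ENNReal.ofReal (u x ^ 2)) * ⨅ x ∈ Ω, kappaSet k Ω x
      ≤ ∫⁻ x in Ω, ENNReal.ofReal (u x ^ 2) * ⨅ x ∈ Ω, kappaSet k Ω x :=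
        lintegral_mul_const_le _ _
    _ ≤ ∫⁻ x in Ω, ENNReal.ofReal (u x ^ 2) * kappaSet k Ω x := by
        refine lintegral_mono_ae ?_
        filter_upwards [ae_restrict_mem hΩ] with x hx
        gcongr
        exact iInf₂_le x hx
    _ ≤ jEnergy k u := lintegral_sq_mul_kappaSet_le_jEnergy hk hΩ hu_meas hu.2.2

theorem jEnergy_ge_and_lambda1_ge (N : ℕ) (k : ℝ → ℝ) (hk : KCond N k)
    (Ω : Set (Euc N)) (hΩo : IsOpen Ω) :
    (∀ u : Euc N → ℝ, memDJ k Ω u →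
      ∫⁻ x in Ω, ENNReal.ofReal ((u x) ^ 2) * kappaSet k Ω x ≤ jEnergy k u) ∧
    (⨅ x ∈ Ω, kappaSet k Ω x) ≤ lambda1 k Ω :=
  ⟨fun _ hu => lintegral_sq_mul_kappaSet_le_jEnergy hk.2.1 hΩo.measurableSet
      hu.1.aestronglyMeasurable.aemeasurable hu.2.2,
    iInf_kappaSet_le_lambda1 hk.2.1 hΩo.measurableSet⟩
end
end

section
/- Assume k : (0,∞) → [0,∞) satisfies condition (k). Then lim_{r→0} inf_{Ω ⊂ ℝ^N open, |Ω| = r} inf_{x∈Ω} κ_Ω(x) = ∞; that is, for every M > 0 there is r* > 0 such that for every r ∈ (0,r*), every open set Ω ⊂ ℝ^N with Lebesgue measure |Ω| = r, and every x ∈ Ω, one has κ_Ω(x) ≥ M. -/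
open MeasureTheory Metric Set Filter
open scoped ENNReal RealInnerProductSpace

noncomputable section

variable {N : ℕ}

/-!
Condition (k) forces `∫ k(|y|) dy = ∞` over `ℝ^N`: in polar coordinates this is
`∫₀^∞ k(r) r^(N-1) dr`. By monotone convergence some truncation already satisfies
`∫ min(k(|x - y|), n) dy > M + 1`, and this does not depend on `x`. Splitting the integral
over `Ω` and its complement bounds it by `n |Ω| + κ_Ω(x)`, so `κ_Ω(x) > M` once `n |Ω| ≤ 1`.
-/

/-- Extending `k` by `⊤` on `(-∞, 0]` makes it antitone, hence measurable, on all of `ℝ`;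
`extKernel k (dist x y)` differs from `k (dist x y)` only at `y = x`. -/
def extKernel (k : ℝ → ℝ) (r : ℝ) : ℝ≥0∞ :=
  if 0 < r then ENNReal.ofReal (k r) else ⊤

section extKernel

variable {k : ℝ → ℝ}

theorem extKernel_of_pos {r : ℝ} (hr : 0 < r) : extKernel k r = ENNReal.ofReal (k r) :=
  if_pos hr

theorem extKernel_of_nonpos {r : ℝ} (hr : r ≤ 0) : extKernel k r = ⊤ :=
  if_neg hr.not_gt

theorem antitone_extKernel (hk : AntitoneOn k (Ioi 0)) : Antitone (extKernel k) := by
  intro a b hab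
  by_cases ha : 0 < a
  · rw [extKernel_of_pos ha, extKernel_of_pos (ha.trans_le hab)]
    exact ENNReal.ofReal_le_ofReal (hk ha (ha.trans_le hab) hab)
  · rw [extKernel_of_nonpos (not_lt.1 ha)]
    exact le_top

end extKernel

theorem exists_lt_lintegral_min_natCast {α : Type*} [MeasurableSpace α] {μ : Measure α}
    {f : α → ℝ≥0∞} (hf : Measurable f) (htop : ∫⁻ x, f x ∂μ = ⊤) {A : ℝ≥0∞} (hA : A < ⊤) :
    ∃ n : ℕ, A < ∫⁻ x, min (f x) n ∂μ := by
  have hsup : ⨆ n : ℕ, ∫⁻ x, min (f x) n ∂μ = ⊤ := by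
    rw [← lintegral_iSup (fun n => hf.min measurable_const)
      (fun m n hmn x => min_le_min_left _ (Nat.cast_le.2 hmn))]
    simp_rw [← inf_iSup_eq, ENNReal.iSup_natCast, inf_top_eq, htop]
  exact lt_iSup_iff.1 (hsup ▸ hA)

theorem lintegral_min_le_mul_measure_add_setLIntegral_compl {α : Type*} [MeasurableSpace α]
    {μ : Measure α} {s : Set α} (hs : MeasurableSet s) (f : α → ℝ≥0∞) (c : ℝ≥0∞) :
    ∫⁻ x, min (f x) c ∂μ ≤ c * μ s + ∫⁻ x in sᶜ, f x ∂μ := by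
  rw [← lintegral_add_compl _ hs, ← setLIntegral_const]
  gcongr with x x
  · exact min_le_right _ _
  · exact min_le_left _ _

theorem lintegral_comp_dist_left {G : Type*} [NormedAddCommGroup G] [MeasurableSpace G]
    [MeasurableAdd G] (μ : Measure G) [μ.IsAddLeftInvariant] (g : ℝ → ℝ≥0∞) (x : G) :
    ∫⁻ y, g (dist x y) ∂μ = ∫⁻ y, g ‖y‖ ∂μ := by
  rw [← lintegral_add_left_eq_self _ x]
  simp_rw [dist_self_add_right]

theorem lintegral_extKernel_norm_eq_top {E : Type*} [NormedAddCommGroup E] [NormedSpace ℝ E]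
    [MeasurableSpace E] [BorelSpace E] [FiniteDimensional ℝ E] (μ : Measure E)
    [μ.IsAddHaarMeasure] {k : ℝ → ℝ} (hk₀ : ∀ r, 0 < r → 0 ≤ k r)
    (hk : AntitoneOn k (Ioi 0))
    (hdiv : ¬ IntegrableOn (fun r => k r * r ^ (Module.finrank ℝ E - 1)) (Ioi 0)) :
    ∫⁻ x, extKernel k ‖x‖ ∂μ = ⊤ := by
  rcases subsingleton_or_nontrivial E with _ | _
  · simp_rw [Subsingleton.elim _ (0 : E), norm_zero, extKernel_of_nonpos le_rfl, lintegral_const,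
      ENNReal.top_mul (NeZero.ne (μ univ))]
  · by_contra hfin
    have hmeas : Measurable fun x : E => extKernel k ‖x‖ :=
      (antitone_extKernel hk).measurable.comp measurable_norm
    have hradial := (integrable_fun_norm_addHaar μ (f := fun r => (extKernel k r).toReal)).1
      (integrable_toReal_of_lintegral_ne_top hmeas.aemeasurable hfin)
    refine hdiv (hradial.congr_fun (fun r (hr : 0 < r) => ?_) measurableSet_Ioi)
    simp [extKernel_of_pos hr, hk₀ r hr, mul_comm]

theorem kappaSet_eq_setLIntegral_extKernel {k : ℝ → ℝ} {Ω : Set (Euc N)} (hΩ : MeasurableSet Ω)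
    {x : Euc N} (hx : x ∈ Ω) :
    kappaSet k Ω x = ∫⁻ y in Ωᶜ, extKernel k (dist x y) := by
  refine setLIntegral_congr_fun hΩ.compl fun y hy => ?_
  rw [extKernel_of_pos (dist_pos.2 (ne_of_mem_of_not_mem hx hy))]

theorem kappa_blows_up_for_small_sets (N : ℕ) (k : ℝ → ℝ) (hk : KCond N k) :
    ∀ M : ℝ, 0 < M → ∃ rstar > 0, ∀ r : ℝ, 0 < r → r < rstar →
      ∀ Ω : Set (Euc N), IsOpen Ω → volume Ω = ENNReal.ofReal r →
        ∀ x ∈ Ω, ENNReal.ofReal M ≤ kappaSet k Ω x := by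
  obtain ⟨hk₀, hk, -, -, hdiv⟩ := hk
  intro M _
  obtain ⟨n, hn⟩ := exists_lt_lintegral_min_natCast
    ((antitone_extKernel hk).measurable.comp measurable_norm)
    (lintegral_extKernel_norm_eq_top (volume : Measure (Euc N)) hk₀ hk
      (by rwa [finrank_euclideanSpace_fin]))
    (by simp : 1 + ENNReal.ofReal M < ⊤)
  refine ⟨1 / ((n : ℝ) + 1), by positivity, fun r _ hrn Ω hΩ hvol x hx => ?_⟩
  have hsmall : (n : ℝ≥0∞) * volume Ω ≤ 1 := by
    rw [hvol, ← ENNReal.ofReal_natCast, ← ENNReal.ofReal_mul (Nat.cast_nonneg n),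
      ← ENNReal.ofReal_one]
    rw [lt_div_iff₀ (by positivity)] at hrn
    exact ENNReal.ofReal_le_ofReal (by nlinarith)
  have key : 1 + ENNReal.ofReal M < 1 + kappaSet k Ω x :=
    calc 1 + ENNReal.ofReal M < ∫⁻ y, min (extKernel k (dist x y)) n ∂volume := by
          rw [lintegral_comp_dist_left volume (fun t => min (extKernel k t) n)]
          exact hn
      _ ≤ n * volume Ω + ∫⁻ y in Ωᶜ, extKernel k (dist x y) :=
          lintegral_min_le_mul_measure_add_setLIntegral_compl hΩ.measurableSet _ _
      _ ≤ 1 + kappaSet k Ω x := by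
          rw [kappaSet_eq_setLIntegral_extKernel hΩ.measurableSet hx]
          gcongr
  exact ((ENNReal.add_lt_add_iff_left ENNReal.one_ne_top).1 key).le
end
end

section
/- Assume k : (0,∞) → [0,∞) satisfies condition (k). Let U' ⊂ ℝ^N be open and v, φ ∈ V^J(U'). Suppose φ ≡ 0 on ℝ^N∖U for some open bounded set U ⊂ U' with dist(U, ℝ^N∖U') > 0. Then ∫_{ℝ^N}∫_{ℝ^N} |v(x)−v(y)| |φ(x)−φ(y)| k(|x−y|) dx dy < ∞, so that J(v,φ) := (1/2)∫_{ℝ^N}∫_{ℝ^N} (v(x)−v(y))(φ(x)−φ(y)) k(|x−y|) dx dy is well defined and finite. -/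
open MeasureTheory Metric Set Filter
open scoped ENNReal RealInnerProductSpace

noncomputable section

variable {N : ℕ}

/-! The integrand vanishes unless `(x, y)` lies in `U' × U'`, `U × U'ᶜ` or `U'ᶜ × U`. On `U' × U'`
it is bounded by `((v x - v y)² + (φ x - φ y)²) k(|x - y|)`, whose integral is `ρ(v,U') + ρ(φ,U')`.
On `U × U'ᶜ` we have `|x - y| ≥ d`, so only the tail `k · 1_{[d,∞)}` of the kernel enters; it is
bounded, and integrable over `ℝ^N` by polar coordinates and `∫ min{1,r²} k(r) r^{N-1} dr < ∞`.
Hence its convolution with `|v| ∈ L² + L^∞` is bounded, and the remaining integral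
`∫_U |φ| (|v| + 1)` is finite because `φ, v ∈ L²(U)` and `U` has finite measure. -/

/-- Extending `k` by `⊤` on `(-∞, 0]` makes it antitone on all of `ℝ`, hence measurable; the value
`⊤` is only ever met on the diagonal, where the other factors of the integrands vanish. -/
def ennKernel (k : ℝ → ℝ) (r : ℝ) : ℝ≥0∞ := if 0 < r then ENNReal.ofReal (k r) else ⊤

lemma ennKernel_of_pos {k : ℝ → ℝ} {r : ℝ} (hr : 0 < r) :
    ennKernel k r = ENNReal.ofReal (k r) :=
  if_pos hr

lemma antitone_ennKernel {k : ℝ → ℝ} (hk : AntitoneOn k (Ioi 0)) : Antitone (ennKernel k) := by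
  intro a b hab
  by_cases ha : 0 < a
  · rw [ennKernel_of_pos ha, ennKernel_of_pos (ha.trans_le hab)]
    exact ENNReal.ofReal_le_ofReal (hk ha (ha.trans_le hab) hab)
  · simp [ennKernel, ha]

lemma ofReal_mul_eq_mul_ennKernel {X : Type*} [MetricSpace X] {k : ℝ → ℝ} {a : ℝ} (ha : 0 ≤ a)
    {x y : X} (hdiag : x = y → a = 0) :
    ENNReal.ofReal (a * k (dist x y)) = ENNReal.ofReal a * ennKernel k (dist x y) := by
  rcases eq_or_ne x y with rfl | hxy
  · simp [hdiag rfl]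
  · rw [ennKernel_of_pos (dist_pos.2 hxy), ENNReal.ofReal_mul ha]

lemma rhoE_eq_lintegral_ennKernel (k : ℝ → ℝ) (U : Set (Euc N)) (v : Euc N → ℝ) :
    rhoE k U v = ∫⁻ x in U, ∫⁻ y in U, ‖v x - v y‖ₑ ^ 2 * ennKernel k (dist x y) := by
  refine lintegral_congr fun x => lintegral_congr fun y => ?_
  rw [ofReal_mul_eq_mul_ennKernel (sq_nonneg _) (by rintro rfl; simp),
    Real.enorm_eq_ofReal_abs, ← ENNReal.ofReal_pow (abs_nonneg _), sq_abs]

lemma integrable_indicator_Ici_comp_norm {E : Type*} [NormedAddCommGroup E] [NormedSpace ℝ E]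
    [FiniteDimensional ℝ E] [MeasurableSpace E] [BorelSpace E] (μ : Measure E)
    [μ.IsAddHaarMeasure] {k : ℝ → ℝ}
    (hk : IntegrableOn (fun r => min 1 (r ^ 2) * k r * r ^ (Module.finrank ℝ E - 1)) (Ioi 0))
    {d : ℝ} (hd : 0 < d) :
    Integrable (fun z : E => (Ici d).indicator k ‖z‖) μ := by
  rcases subsingleton_or_nontrivial E with hE | hE
  · have hzero : (fun z : E => (Ici d).indicator k ‖z‖) = 0 := by
      funext z
      simp [Subsingleton.elim z 0, hd.not_ge]
    exact hzero ▸ integrable_zero _ _ _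
  rw [integrable_fun_norm_addHaar μ]
  have hmin : 0 < min 1 (d ^ 2) := lt_min one_pos (by positivity)
  -- on `[d, ∞)` the weight `min 1 r²` of the hypothesis is bounded below by `min 1 d²`
  set w : ℝ → ℝ := (Ici d).indicator fun r => (min 1 (r ^ 2))⁻¹
  have hw_bound : ∀ r, ‖w r‖ ≤ (min 1 (d ^ 2))⁻¹ := by
    intro r
    by_cases hr : r ∈ Ici d
    · have hr2 : min 1 (d ^ 2) ≤ min 1 (r ^ 2) :=
        min_le_min le_rfl (pow_le_pow_left₀ hd.le hr 2)
      simp only [w, indicator_of_mem hr]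
      rw [norm_inv, Real.norm_of_nonneg (hmin.trans_le hr2).le]
      exact inv_anti₀ hmin hr2
    · simp [w, indicator_of_notMem hr, hmin.le]
  have hw_meas : Measurable w := by
    refine Measurable.indicator ?_ measurableSet_Ici
    fun_prop
  refine (hk.bdd_mul hw_meas.aestronglyMeasurable (ae_of_all _ hw_bound)).congr ?_
  filter_upwards [ae_restrict_mem measurableSet_Ioi] with r hr
  by_cases hrd : r ∈ Ici d
  · have hpos : min 1 (r ^ 2) ≠ 0 := (lt_min one_pos (pow_pos hr 2)).ne'
    simp only [w, indicator_of_mem hrd, smul_eq_mul]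
    field_simp [hpos]
  · simp [w, indicator_of_notMem hrd]

lemma lintegral_indicator_Ici_ennKernel_ne_top {E : Type*} [NormedAddCommGroup E]
    [NormedSpace ℝ E] [FiniteDimensional ℝ E] [MeasurableSpace E] [BorelSpace E] (μ : Measure E)
    [μ.IsAddHaarMeasure] {k : ℝ → ℝ}
    (hk : IntegrableOn (fun r => min 1 (r ^ 2) * k r * r ^ (Module.finrank ℝ E - 1)) (Ioi 0))
    {d : ℝ} (hd : 0 < d) :
    ∫⁻ z, (Ici d).indicator (ennKernel k) ‖z‖ ∂μ ≠ ⊤ := by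
  refine ne_of_eq_of_ne (lintegral_congr fun z => ?_)
    (integrable_indicator_Ici_comp_norm μ hk hd).lintegral_lt_top.ne
  by_cases hz : ‖z‖ ∈ Ici d
  · rw [indicator_of_mem hz, indicator_of_mem hz, ennKernel_of_pos (hd.trans_le hz)]
  · rw [indicator_of_notMem hz, indicator_of_notMem hz, ENNReal.ofReal_zero]

lemma ENNReal.le_sq_add_one (a : ℝ≥0∞) : a ≤ a ^ 2 + 1 := by
  rcases le_total a 1 with h | h
  · exact h.trans le_add_self
  · calc a = a * 1 := (mul_one a).symm
      _ ≤ a * a := by gcongr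
      _ = a ^ 2 := (sq a).symm
      _ ≤ a ^ 2 + 1 := le_self_add

lemma ENNReal.mul_le_sq_add_sq (a b : ℝ≥0∞) : a * b ≤ a ^ 2 + b ^ 2 := by
  rcases le_total a b with h | h
  · calc a * b ≤ b * b := mul_le_mul_left h b
      _ = b ^ 2 := (sq b).symm
      _ ≤ a ^ 2 + b ^ 2 := le_add_self
  · calc a * b ≤ a * a := mul_le_mul_right h a
      _ = a ^ 2 := (sq a).symm
      _ ≤ a ^ 2 + b ^ 2 := le_self_add

def MemL2AddLInfty {α : Type*} [MeasurableSpace α] (μ : Measure α) (u : α → ℝ) : Prop :=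
  ∃ u₁ u₂ : α → ℝ, u = u₁ + u₂ ∧ MemLp u₁ 2 μ ∧ MemLp u₂ ⊤ μ

namespace MemL2AddLInfty

variable {α : Type*} [MeasurableSpace α] {μ : Measure α} {u : α → ℝ}

lemma aemeasurable (hu : MemL2AddLInfty μ u) : AEMeasurable u μ := by
  obtain ⟨u₁, u₂, rfl, h₁, h₂⟩ := hu
  exact h₁.aestronglyMeasurable.aemeasurable.add h₂.aestronglyMeasurable.aemeasurable

lemma memLp_two_restrict (hu : MemL2AddLInfty μ u) {s : Set α} (hs : μ s ≠ ⊤) :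
    MemLp u 2 (μ.restrict s) := by
  obtain ⟨u₁, u₂, rfl, h₁, h₂⟩ := hu
  have := isFiniteMeasure_restrict.2 hs
  exact (h₁.restrict s).add ((h₂.restrict s).mono_exponent le_top)

lemma exists_lintegral_enorm_mul_sub_le [AddGroup α] [MeasurableAdd α] [MeasurableSub α]
    [μ.IsAddRightInvariant] (hu : MemL2AddLInfty μ u) {g : α → ℝ≥0∞} (hg : Measurable g)
    {M : ℝ≥0∞} (hM : M ≠ ⊤) (hgM : ∀ z, g z ≤ M) (hg_int : ∫⁻ z, g z ∂μ ≠ ⊤) :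
    ∃ C ≠ ⊤, ∀ x, ∫⁻ y, ‖u y‖ₑ * g (y - x) ∂μ ≤ C := by
  obtain ⟨u₁, u₂, rfl, h₁, h₂⟩ := hu
  set c := eLpNormEssSup u₂ μ
  have hc : c ≠ ⊤ := by simpa [eLpNorm_exponent_top] using h₂.eLpNorm_ne_top
  have hu₁ : ∫⁻ y, ‖u₁ y‖ₑ ^ 2 ∂μ ≠ ⊤ := by
    simpa [enorm_pow] using h₁.integrable_sq.hasFiniteIntegral.ne
  refine ⟨(∫⁻ y, ‖u₁ y‖ₑ ^ 2 ∂μ) * M + (1 + c) * ∫⁻ z, g z ∂μ, by finiteness, fun x => ?_⟩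
  have hgx : Measurable fun y => g (y - x) := hg.comp (measurable_sub_const x)
  -- `|u₁| ≤ u₁² + 1` trades the `L²` part against the boundedness of `g`
  have hpt : ∀ᵐ y ∂μ, ‖(u₁ + u₂) y‖ₑ * g (y - x) ≤ ‖u₁ y‖ₑ ^ 2 * M + (1 + c) * g (y - x) := by
    filter_upwards [ae_le_eLpNormEssSup (f := u₂) (μ := μ)] with y hy
    calc ‖(u₁ + u₂) y‖ₑ * g (y - x) ≤ (‖u₁ y‖ₑ ^ 2 + 1 + c) * g (y - x) := by
          gcongr
          exact (enorm_add_le _ _).trans (add_le_add (ENNReal.le_sq_add_one _) hy)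
      _ = ‖u₁ y‖ₑ ^ 2 * g (y - x) + (1 + c) * g (y - x) := by ring
      _ ≤ ‖u₁ y‖ₑ ^ 2 * M + (1 + c) * g (y - x) := by gcongr; exact hgM _
  calc ∫⁻ y, ‖(u₁ + u₂) y‖ₑ * g (y - x) ∂μ
      ≤ ∫⁻ y, ‖u₁ y‖ₑ ^ 2 * M + (1 + c) * g (y - x) ∂μ := lintegral_mono_ae hpt
    _ = (∫⁻ y, ‖u₁ y‖ₑ ^ 2 ∂μ) * M + (1 + c) * ∫⁻ z, g z ∂μ := by
      rw [lintegral_add_right _ (hgx.const_mul _), lintegral_mul_const' _ _ hM,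
        lintegral_const_mul _ hgx, lintegral_sub_right_eq_self g x]

end MemL2AddLInfty

lemma AEMeasurable.enorm_sub_comp_fst_snd {α : Type*} [MeasurableSpace α] {μ : Measure α}
    [SFinite μ] {u : α → ℝ} (hu : AEMeasurable u μ) :
    AEMeasurable (fun z : α × α => ‖u z.1 - u z.2‖ₑ) (μ.prod μ) :=
  (hu.comp_fst.sub hu.comp_snd).enorm

section Core

variable {E : Type*} [NormedAddCommGroup E] [MeasurableSpace E] [BorelSpace E] {μ : Measure E}
  {K : ℝ → ℝ≥0∞}

lemma setLIntegral_prod_self_le [SecondCountableTopology E] [SFinite μ] {u φ : E → ℝ}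
    (hu : AEMeasurable u μ) (hK : Measurable K) (s : Set E) :
    ∫⁻ z in s ×ˢ s, ‖u z.1 - u z.2‖ₑ * ‖φ z.1 - φ z.2‖ₑ * K (dist z.1 z.2) ∂μ.prod μ ≤
      (∫⁻ x in s, ∫⁻ y in s, ‖u x - u y‖ₑ ^ 2 * K (dist x y) ∂μ ∂μ) +
        ∫⁻ x in s, ∫⁻ y in s, ‖φ x - φ y‖ₑ ^ 2 * K (dist x y) ∂μ ∂μ := by
  have hu2 : AEMeasurable (fun z : E × E => ‖u z.1 - u z.2‖ₑ ^ 2 * K (dist z.1 z.2))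
      ((μ.prod μ).restrict (s ×ˢ s)) :=
    ((hu.enorm_sub_comp_fst_snd.pow_const 2).mul (hK.comp measurable_dist).aemeasurable).restrict
  calc ∫⁻ z in s ×ˢ s, ‖u z.1 - u z.2‖ₑ * ‖φ z.1 - φ z.2‖ₑ * K (dist z.1 z.2) ∂μ.prod μ
      ≤ ∫⁻ z in s ×ˢ s, ‖u z.1 - u z.2‖ₑ ^ 2 * K (dist z.1 z.2) +
          ‖φ z.1 - φ z.2‖ₑ ^ 2 * K (dist z.1 z.2) ∂μ.prod μ := by
        refine lintegral_mono fun z => ?_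
        rw [← add_mul]
        gcongr
        exact ENNReal.mul_le_sq_add_sq _ _
    _ = (∫⁻ z in s ×ˢ s, ‖u z.1 - u z.2‖ₑ ^ 2 * K (dist z.1 z.2) ∂μ.prod μ) +
          ∫⁻ z in s ×ˢ s, ‖φ z.1 - φ z.2‖ₑ ^ 2 * K (dist z.1 z.2) ∂μ.prod μ :=
        lintegral_add_left' hu2 _
    _ ≤ _ := by
        rw [← Measure.prod_restrict]
        exact add_le_add (lintegral_prod_le _) (lintegral_prod_le _)

lemma setLIntegral_enorm_sub_mul_le [μ.IsAddRightInvariant] (hK : Measurable K) (u : E → ℝ)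
    {t : Set E} (ht : MeasurableSet t) {d : ℝ} {x : E} (hx : ∀ y ∈ t, d ≤ dist x y) {C : ℝ≥0∞}
    (hC : ∫⁻ y, ‖u y‖ₑ * (Ici d).indicator K ‖y - x‖ ∂μ ≤ C) :
    ∫⁻ y in t, ‖u x - u y‖ₑ * K (dist x y) ∂μ ≤
      ‖u x‖ₑ * ∫⁻ z, (Ici d).indicator K ‖z‖ ∂μ + C := by
  have hg : Measurable fun y => (Ici d).indicator K ‖y - x‖ :=
    (hK.indicator measurableSet_Ici).comp (measurable_sub_const x).norm
  calc ∫⁻ y in t, ‖u x - u y‖ₑ * K (dist x y) ∂μ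
      ≤ ∫⁻ y in t, ‖u x‖ₑ * (Ici d).indicator K ‖y - x‖ +
          ‖u y‖ₑ * (Ici d).indicator K ‖y - x‖ ∂μ := by
        refine setLIntegral_mono' ht fun y hy => ?_
        rw [← add_mul, ← dist_eq_norm, dist_comm y x, indicator_of_mem (mem_Ici.2 (hx y hy))]
        gcongr
        exact enorm_sub_le
    _ ≤ ∫⁻ y, ‖u x‖ₑ * (Ici d).indicator K ‖y - x‖ + ‖u y‖ₑ * (Ici d).indicator K ‖y - x‖ ∂μ :=
        setLIntegral_le_lintegral _ _
    _ ≤ ‖u x‖ₑ * ∫⁻ z, (Ici d).indicator K ‖z‖ ∂μ + C := by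
        rw [lintegral_add_left (hg.const_mul _), lintegral_const_mul _ hg,
          lintegral_sub_right_eq_self (fun z => (Ici d).indicator K ‖z‖) x]
        gcongr

lemma setLIntegral_prod_compl_lt_top [SFinite μ] [μ.IsAddRightInvariant] {u φ : E → ℝ}
    (hu : MemL2AddLInfty μ u) (hφ : MemL2AddLInfty μ φ) (hK : Antitone K) {U U' : Set E}
    (hU : MeasurableSet U) (hU' : MeasurableSet U') (hU_fin : μ U ≠ ⊤) {d : ℝ} (hKd : K d ≠ ⊤)
    (htail : ∫⁻ z, (Ici d).indicator K ‖z‖ ∂μ ≠ ⊤)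
    (hdist : ∀ x ∈ U, ∀ y, y ∉ U' → d ≤ dist x y) (hφ0 : ∀ y, y ∉ U' → φ y = 0) :
    ∫⁻ z in U ×ˢ U'ᶜ, ‖u z.1 - u z.2‖ₑ * ‖φ z.1 - φ z.2‖ₑ * K (dist z.1 z.2) ∂μ.prod μ < ⊤ := by
  set T := ∫⁻ z, (Ici d).indicator K ‖z‖ ∂μ
  obtain ⟨C, hC, hC_bound⟩ := hu.exists_lintegral_enorm_mul_sub_le
    ((hK.measurable.indicator measurableSet_Ici).comp measurable_norm) hKd
    (fun z => indicator_apply_le' (fun hz => hK hz) fun _ => zero_le) htail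
  have hinner : ∀ x ∈ U, ∫⁻ y in U'ᶜ, ‖u x - u y‖ₑ * ‖φ x - φ y‖ₑ * K (dist x y) ∂μ ≤
      ‖φ x * u x‖ₑ * T + ‖φ x‖ₑ * C := by
    intro x hx
    calc ∫⁻ y in U'ᶜ, ‖u x - u y‖ₑ * ‖φ x - φ y‖ₑ * K (dist x y) ∂μ
        = ∫⁻ y in U'ᶜ, ‖φ x‖ₑ * (‖u x - u y‖ₑ * K (dist x y)) ∂μ := by
          refine setLIntegral_congr_fun hU'.compl fun y hy => ?_
          rw [hφ0 y hy, sub_zero]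
          ring
      _ = ‖φ x‖ₑ * ∫⁻ y in U'ᶜ, ‖u x - u y‖ₑ * K (dist x y) ∂μ :=
          lintegral_const_mul' _ _ enorm_ne_top
      _ ≤ ‖φ x‖ₑ * (‖u x‖ₑ * T + C) := by
          gcongr
          exact setLIntegral_enorm_sub_mul_le hK.measurable u hU'.compl (hdist x hx)
            (hC_bound x)
      _ = ‖φ x * u x‖ₑ * T + ‖φ x‖ₑ * C := by rw [enorm_mul]; ring
  have hφu : ∫⁻ x in U, ‖φ x * u x‖ₑ ∂μ < ⊤ :=
    ((hφ.memLp_two_restrict hU_fin).integrable_mul (hu.memLp_two_restrict hU_fin)).2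
  have := isFiniteMeasure_restrict.2 hU_fin
  have hφ1 : ∫⁻ x in U, ‖φ x‖ₑ ∂μ < ⊤ :=
    ((hφ.memLp_two_restrict hU_fin).integrable one_le_two).2
  calc ∫⁻ z in U ×ˢ U'ᶜ, ‖u z.1 - u z.2‖ₑ * ‖φ z.1 - φ z.2‖ₑ * K (dist z.1 z.2) ∂μ.prod μ
      ≤ ∫⁻ x in U, ∫⁻ y in U'ᶜ, ‖u x - u y‖ₑ * ‖φ x - φ y‖ₑ * K (dist x y) ∂μ ∂μ := by
        rw [← Measure.prod_restrict]
        exact lintegral_prod_le _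
    _ ≤ ∫⁻ x in U, ‖φ x * u x‖ₑ * T + ‖φ x‖ₑ * C ∂μ := setLIntegral_mono' hU hinner
    _ = (∫⁻ x in U, ‖φ x * u x‖ₑ ∂μ) * T + (∫⁻ x in U, ‖φ x‖ₑ ∂μ) * C := by
        rw [lintegral_add_left'
            ((hφ.aemeasurable.fun_mul hu.aemeasurable).enorm.mul_const _).restrict,
          lintegral_mul_const' _ _ htail, lintegral_mul_const' _ _ hC]
    _ < ⊤ := by finiteness

theorem lintegral_lintegral_enorm_mul_kernel_lt_top [SecondCountableTopology E] [SFinite μ]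
    [μ.IsAddRightInvariant] {u φ : E → ℝ} (hu : MemL2AddLInfty μ u) (hφ : MemL2AddLInfty μ φ)
    (hK : Antitone K) {U U' : Set E} (hU : MeasurableSet U) (hU' : MeasurableSet U')
    (hU_fin : μ U ≠ ⊤) (hUU' : U ⊆ U') {d : ℝ} (hKd : K d ≠ ⊤)
    (htail : ∫⁻ z, (Ici d).indicator K ‖z‖ ∂μ ≠ ⊤)
    (hdist : ∀ x ∈ U, ∀ y, y ∉ U' → d ≤ dist x y) (hφ0 : ∀ x, x ∉ U → φ x = 0)
    (hρu : ∫⁻ x in U', ∫⁻ y in U', ‖u x - u y‖ₑ ^ 2 * K (dist x y) ∂μ ∂μ ≠ ⊤)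
    (hρφ : ∫⁻ x in U', ∫⁻ y in U', ‖φ x - φ y‖ₑ ^ 2 * K (dist x y) ∂μ ∂μ ≠ ⊤) :
    ∫⁻ x, ∫⁻ y, ‖u x - u y‖ₑ * ‖φ x - φ y‖ₑ * K (dist x y) ∂μ ∂μ < ⊤ := by
  set F : E × E → ℝ≥0∞ := fun z => ‖u z.1 - u z.2‖ₑ * ‖φ z.1 - φ z.2‖ₑ * K (dist z.1 z.2)
  have hF : AEMeasurable F (μ.prod μ) :=
    (hu.aemeasurable.enorm_sub_comp_fst_snd.mul hφ.aemeasurable.enorm_sub_comp_fst_snd).mul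
      (hK.measurable.comp measurable_dist).aemeasurable
  have hφ0' : ∀ y, y ∉ U' → φ y = 0 := fun y hy => hφ0 y fun h => hy (hUU' h)
  have hF_supp : F.support ⊆ U' ×ˢ U' ∪ U ×ˢ U'ᶜ ∪ U'ᶜ ×ˢ U := by
    rintro ⟨x, y⟩ hxy
    have hne : φ x ≠ φ y := fun h => hxy (by simp [F, h])
    by_cases hx : x ∈ U' <;> by_cases hy : y ∈ U'
    · exact Or.inl (Or.inl ⟨hx, hy⟩)
    · refine Or.inl (Or.inr ⟨by_contra fun hxU => hne ?_, hy⟩)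
      rw [hφ0 x hxU, hφ0' y hy]
    · refine Or.inr ⟨hx, by_contra fun hyU => hne ?_⟩
      rw [hφ0' x hx, hφ0 y hyU]
    · exact absurd (by rw [hφ0' x hx, hφ0' y hy]) hne
  have hF_swap : ∫⁻ z in U'ᶜ ×ˢ U, F z ∂μ.prod μ = ∫⁻ z in U ×ˢ U'ᶜ, F z ∂μ.prod μ := by
    rw [← Measure.prod_restrict, ← Measure.prod_restrict, ← lintegral_prod_swap]
    simp only [F, Prod.fst_swap, Prod.snd_swap, enorm_sub_rev, dist_comm]
  have hnear := setLIntegral_prod_self_le hu.aemeasurable hK.measurable (φ := φ) U'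
  have hcross := setLIntegral_prod_compl_lt_top hu hφ hK hU hU' hU_fin hKd htail hdist hφ0'
  calc ∫⁻ x, ∫⁻ y, ‖u x - u y‖ₑ * ‖φ x - φ y‖ₑ * K (dist x y) ∂μ ∂μ
      = ∫⁻ z, F z ∂μ.prod μ := (lintegral_prod F hF).symm
    _ = ∫⁻ z in U' ×ˢ U' ∪ U ×ˢ U'ᶜ ∪ U'ᶜ ×ˢ U, F z ∂μ.prod μ :=
        (setLIntegral_eq_of_support_subset hF_supp).symm
    _ ≤ (∫⁻ z in U' ×ˢ U', F z ∂μ.prod μ) + (∫⁻ z in U ×ˢ U'ᶜ, F z ∂μ.prod μ) +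
          ∫⁻ z in U'ᶜ ×ˢ U, F z ∂μ.prod μ :=
        (lintegral_union_le _ _ _).trans (add_le_add_left (lintegral_union_le _ _ _) _)
    _ < ⊤ := by
        rw [hF_swap]
        exact ENNReal.add_lt_top.2
          ⟨ENNReal.add_lt_top.2 ⟨hnear.trans_lt (by finiteness), hcross⟩, hcross⟩

end Core

theorem jForm_well_defined (N : ℕ) (k : ℝ → ℝ) (hk : KCond N k)
    (U' : Set (Euc N)) (hU'o : IsOpen U')
    (v φ : Euc N → ℝ) (hv : memVJ k U' v) (hφ : memVJ k U' φ)
    (U : Set (Euc N)) (hUo : IsOpen U) (hUb : Bornology.IsBounded U) (hUU' : U ⊆ U')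
    (hdist : ∃ d > 0, ∀ x ∈ U, ∀ y : Euc N, y ∉ U' → d ≤ dist x y)
    (hφ0 : ∀ x, x ∉ U → φ x = 0) :
    (∫⁻ x, ∫⁻ y, ENNReal.ofReal (|v x - v y| * |φ x - φ y| * k (dist x y))) < ⊤ := by
  obtain ⟨-, hk_anti, -, hk_int, -⟩ := hk
  obtain ⟨d, hd, hdist⟩ := hdist
  have htail := lintegral_indicator_Ici_ennKernel_ne_top (volume : Measure (Euc N))
    (by rwa [finrank_euclideanSpace_fin]) hd
  have hρ : ∀ w, memVJ k U' w →
      ∫⁻ x in U', ∫⁻ y in U', ‖w x - w y‖ₑ ^ 2 * ennKernel k (dist x y) ≠ ⊤ := fun w hw => by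
    rw [← rhoE_eq_lintegral_ennKernel]
    exact hw.2.ne
  calc (∫⁻ x, ∫⁻ y, ENNReal.ofReal (|v x - v y| * |φ x - φ y| * k (dist x y)))
      = ∫⁻ x, ∫⁻ y, ‖v x - v y‖ₑ * ‖φ x - φ y‖ₑ * ennKernel k (dist x y) := by
        refine lintegral_congr fun x => lintegral_congr fun y => ?_
        rw [ofReal_mul_eq_mul_ennKernel (by positivity) (by rintro rfl; simp),
          ENNReal.ofReal_mul (abs_nonneg _), Real.enorm_eq_ofReal_abs, Real.enorm_eq_ofReal_abs]
    _ < ⊤ := lintegral_lintegral_enorm_mul_kernel_lt_top hv.1 hφ.1 (antitone_ennKernel hk_anti)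
        hUo.measurableSet hU'o.measurableSet hUb.measure_lt_top.ne hUU'
        (by rw [ennKernel_of_pos hd]; exact ENNReal.ofReal_ne_top) htail hdist hφ0
        (hρ v hv) (hρ φ hφ)
end
end

section
/- Assume k : (0,∞) → [0,∞) satisfies condition (k). If U' ⊂ ℝ^N is open and v ∈ V^J(U'), then the positive and negative parts v⁺, v⁻ belong to V^J(U') and satisfy ρ(v⁺,U') ≤ ρ(v,U') and ρ(v⁻,U') ≤ ρ(v,U'). Moreover, if v ∈ V^J(ℝ^N), then 0 ≥ J(v⁺,v⁻) > −∞. -/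
open MeasureTheory Metric Set Filter
open scoped ENNReal RealInnerProductSpace

noncomputable section

variable {N : ℕ}

/-!
The maps `a ↦ a⁺` and `a ↦ a⁻` are `1`-Lipschitz and vanish at `0`, so they preserve
`L² + L^∞` and can only decrease the integrand `(v x - v y)² k(|x - y|)` of `ρ`. For the cross
term, `(a⁺ - b⁺)(a⁻ - b⁻) ≤ 0` (the two differences never have the same sign), and since
`a - b = (a⁺ - b⁺) - (a⁻ - b⁻)` its absolute value is at most `(a - b)²`.
-/

lemma LipschitzWith.abs_sub_le {φ : ℝ → ℝ} (hφ : LipschitzWith 1 φ) (a b : ℝ) :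
    |φ a - φ b| ≤ |a - b| := by
  simpa [Real.dist_eq] using hφ.dist_le_mul a b

lemma max_zero_sub_mul_max_neg_zero_sub_nonpos (a b : ℝ) :
    (max a 0 - max b 0) * (max (-a) 0 - max (-b) 0) ≤ 0 := by
  rcases le_total a 0 with ha | ha <;> rcases le_total b 0 with hb | hb <;>
    simp only [max_eq_left, max_eq_right, ha, hb, neg_nonneg, neg_nonpos] <;> nlinarith

lemma abs_max_zero_sub_mul_abs_max_neg_zero_sub_le_sq (a b : ℝ) :
    |max a 0 - max b 0| * |max (-a) 0 - max (-b) 0| ≤ (a - b) ^ 2 := by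
  set p := max a 0 - max b 0
  set q := max (-a) 0 - max (-b) 0
  have hpq : p * q ≤ 0 := max_zero_sub_mul_max_neg_zero_sub_nonpos a b
  have hab : a - b = p - q := by
    linarith [max_zero_sub_max_neg_zero_eq_self a, max_zero_sub_max_neg_zero_eq_self b]
  rw [hab, ← abs_mul, abs_of_nonpos hpq]
  nlinarith [sq_nonneg (p + q)]

lemma ENNReal.ofReal_mul_le_ofReal_mul {a b : ℝ} (c : ℝ) (ha : 0 ≤ a) (hab : a ≤ b) :
    ENNReal.ofReal (a * c) ≤ ENNReal.ofReal (b * c) := by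
  rcases le_total 0 c with hc | hc
  · exact ENNReal.ofReal_le_ofReal (mul_le_mul_of_nonneg_right hab hc)
  · simp [ENNReal.ofReal_of_nonpos (mul_nonpos_of_nonneg_of_nonpos ha hc)]

lemma MeasureTheory.MemLp.exists_add_comp_eq_add {α : Type*} [MeasurableSpace α] {μ : Measure α}
    {p q : ℝ≥0∞} {φ : ℝ → ℝ} (hφ : LipschitzWith 1 φ) (hφ0 : φ 0 = 0) {v₁ v₂ : α → ℝ}
    (h₁ : MemLp v₁ p μ) (h₂ : MemLp v₂ q μ) :
    ∃ w₁ w₂ : α → ℝ, φ ∘ (v₁ + v₂) = w₁ + w₂ ∧ MemLp w₁ p μ ∧ MemLp w₂ q μ := by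
  have hφv₂ : MemLp (φ ∘ v₂) q μ :=
    h₂.of_le (hφ.continuous.comp_aestronglyMeasurable h₂.1) <| .of_forall fun x => by
      simpa [hφ0] using hφ.abs_sub_le (v₂ x) 0
  refine ⟨φ ∘ (v₁ + v₂) - φ ∘ v₂, φ ∘ v₂, (sub_add_cancel _ _).symm, ?_, hφv₂⟩
  refine h₁.of_le ((hφ.continuous.comp_aestronglyMeasurable (h₁.1.add h₂.1)).sub hφv₂.1) <|
    .of_forall fun x => ?_
  simpa using hφ.abs_sub_le (v₁ x + v₂ x) (v₂ x)

section Energy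

variable {k : ℝ → ℝ} {U : Set (Euc N)} {v : Euc N → ℝ} {φ : ℝ → ℝ}

lemma rhoE_comp_le (hφ : LipschitzWith 1 φ) : rhoE k U (φ ∘ v) ≤ rhoE k U v :=
  lintegral_mono fun _ => lintegral_mono fun _ =>
    ENNReal.ofReal_mul_le_ofReal_mul _ (sq_nonneg _) (sq_le_sq.2 (hφ.abs_sub_le _ _))

lemma memVJ.comp (hv : memVJ k U v) (hφ : LipschitzWith 1 φ) (hφ0 : φ 0 = 0) :
    memVJ k U (φ ∘ v) := by
  obtain ⟨⟨v₁, v₂, rfl, h₁, h₂⟩, hρ⟩ := hv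
  exact ⟨h₁.exists_add_comp_eq_add hφ hφ0 h₂, (rhoE_comp_le hφ).trans_lt hρ⟩

lemma lintegral_posPart_negPart_cross_le_rhoE_univ (v : Euc N → ℝ) :
    ∫⁻ x, ∫⁻ y, ENNReal.ofReal
        (|max (v x) 0 - max (v y) 0| * |max (-v x) 0 - max (-v y) 0| * k (dist x y)) ≤
      rhoE k Set.univ v := by
  simp only [rhoE, Measure.restrict_univ]
  exact lintegral_mono fun _ => lintegral_mono fun _ =>
    ENNReal.ofReal_mul_le_ofReal_mul _ (by positivity)
      (abs_max_zero_sub_mul_abs_max_neg_zero_sub_le_sq _ _)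

lemma jForm_nonpos (hk : ∀ r : ℝ, 0 < r → 0 ≤ k r) {w : Euc N → ℝ}
    (h : ∀ x y, (v x - v y) * (w x - w y) ≤ 0) : jForm k v w ≤ 0 := by
  refine mul_nonpos_of_nonneg_of_nonpos (by norm_num) <|
    integral_nonpos fun x => integral_nonpos fun y => ?_
  rcases eq_or_ne x y with rfl | hxy
  · simp
  · exact mul_nonpos_of_nonpos_of_nonneg (h x y) (hk _ (dist_pos.2 hxy))

end Energy

theorem pos_neg_parts_in_VJ_general (N : ℕ) (k : ℝ → ℝ) (hk : KCond N k)
    (U' : Set (Euc N)) (v : Euc N → ℝ) (hv : memVJ k U' v) :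
    (memVJ k U' (fun x => max (v x) 0) ∧ rhoE k U' (fun x => max (v x) 0) ≤ rhoE k U' v) ∧
    (memVJ k U' (fun x => max (-v x) 0) ∧ rhoE k U' (fun x => max (-v x) 0) ≤ rhoE k U' v) ∧
    (U' = Set.univ →
      (∫⁻ x, ∫⁻ y, ENNReal.ofReal
        (|max (v x) 0 - max (v y) 0| * |max (-v x) 0 - max (-v y) 0| * k (dist x y))) < ⊤ ∧
      jForm k (fun x => max (v x) 0) (fun x => max (-v x) 0) ≤ 0) := by
  have hpos : LipschitzWith 1 fun a : ℝ => max a 0 := LipschitzWith.id.max_const 0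
  have hneg : LipschitzWith 1 fun a : ℝ => max (-a) 0 := LipschitzWith.id.neg.max_const 0
  refine ⟨⟨hv.comp hpos (by simp), rhoE_comp_le hpos⟩,
    ⟨hv.comp hneg (by simp), rhoE_comp_le hneg⟩, ?_⟩
  rintro rfl
  exact ⟨(lintegral_posPart_negPart_cross_le_rhoE_univ v).trans_lt hv.2,
    jForm_nonpos hk.1 fun x y => max_zero_sub_mul_max_neg_zero_sub_nonpos _ _⟩

theorem pos_neg_parts_in_VJ (N : ℕ) (k : ℝ → ℝ) (hk : KCond N k)
    (U' : Set (Euc N)) (hU'o : IsOpen U') (v : Euc N → ℝ) (hv : memVJ k U' v) :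
    (memVJ k U' (fun x => max (v x) 0) ∧ rhoE k U' (fun x => max (v x) 0) ≤ rhoE k U' v) ∧
    (memVJ k U' (fun x => max (-v x) 0) ∧ rhoE k U' (fun x => max (-v x) 0) ≤ rhoE k U' v) ∧
    (U' = Set.univ →
      (∫⁻ x, ∫⁻ y, ENNReal.ofReal
        (|max (v x) 0 - max (v y) 0| * |max (-v x) 0 - max (-v y) 0| * k (dist x y))) < ⊤ ∧
      jForm k (fun x => max (v x) 0) (fun x => max (-v x) 0) ≤ 0) :=
  pos_neg_parts_in_VJ_general N k hk U' v hv
end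
end

section
/- Let H ⊂ ℝ^N be an open affine half-space with reflection Q_H across ∂H, and let k : (0,∞) → [0,∞) be decreasing and strictly decreasing on (0,r₀) for some r₀ > 0. Then: (i) k(|x−y|) ≥ k(|x−Q_H(y)|) for all x, y ∈ H; and (ii) for every x ∈ H and every r with 0 < r < min{r₀, dist(x,∂H)}, one has ess inf_{y ∈ B_r(x)} ( k(|x−y|) − k(|x−Q_H(y)|) ) > 0. -/
open MeasureTheory Metric Set Filter
open scoped ENNReal RealInnerProductSpace

noncomputable section

variable {N : ℕ}

/-! For `y` on the same side of the hyperplane as `x`, the identity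
`|x - Q y|² = |x - y|² + 4 a b` (with `a`, `b` the heights of `x`, `y`) shows that reflecting `y`
moves it away from `x`, so (i) follows from monotonicity of `k`. If moreover `|x - y| < r < a`,
then `|x - Q y| ≥ 2a - r > r`, and strict monotonicity of `k` on `(0, r₀)` separates
`k |x - y| ≥ k r` from `k |x - Q y|` by a fixed gap, which gives (ii). -/

lemma dist_reflSp_sq {e : Euc N} (he : ‖e‖ = 1) (l : ℝ) (x y : Euc N) :
    dist x (reflSp e l y) ^ 2 = dist x y ^ 2 + 4 * (⟪x, e⟫ - l) * (⟪y, e⟫ - l) := by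
  have hsub : x - reflSp e l y = (x - y) - (2 * (l - ⟪y, e⟫)) • e := by
    simp only [reflSp]
    abel
  rw [dist_eq_norm, dist_eq_norm, hsub, norm_sub_sq_real, real_inner_smul_right, norm_smul,
    inner_sub_left, mul_pow, Real.norm_eq_abs, sq_abs, he]
  ring

lemma dist_le_dist_reflSp {e : Euc N} (he : ‖e‖ = 1) {l : ℝ} {x y : Euc N}
    (hx : l ≤ ⟪x, e⟫) (hy : l ≤ ⟪y, e⟫) : dist x y ≤ dist x (reflSp e l y) := by
  have hprod : 0 ≤ (⟪x, e⟫ - l) * (⟪y, e⟫ - l) := mul_nonneg (sub_nonneg.2 hx) (sub_nonneg.2 hy)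
  nlinarith [dist_reflSp_sq he l x y, dist_nonneg (x := x) (y := reflSp e l y)]

/-- By Cauchy–Schwarz, `y` lies at height at least `a - |x - y|` where `a` is the height of `x`;
insert this into `dist_reflSp_sq`. -/
lemma two_mul_sub_dist_le_dist_reflSp {e : Euc N} (he : ‖e‖ = 1) {l : ℝ}
    {x : Euc N} (hx : l ≤ ⟪x, e⟫) (y : Euc N) :
    2 * (⟪x, e⟫ - l) - dist x y ≤ dist x (reflSp e l y) := by
  have hheight : ⟪x, e⟫ - dist x y ≤ ⟪y, e⟫ := by
    have hcs := real_inner_le_norm (x - y) e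
    rw [inner_sub_left, he, mul_one, ← dist_eq_norm] at hcs
    linarith
  nlinarith [dist_reflSp_sq he l x y, dist_nonneg (x := x) (y := reflSp e l y),
    dist_nonneg (x := x) (y := y)]

lemma infDist_hyperplane_le {e : Euc N} (he : ‖e‖ = 1) (l : ℝ) (x : Euc N) :
    infDist x {z : Euc N | ⟪z, e⟫ = l} ≤ |⟪x, e⟫ - l| := by
  have hfoot : x + (l - ⟪x, e⟫) • e ∈ {z : Euc N | ⟪z, e⟫ = l} := by
    show ⟪x + (l - ⟪x, e⟫) • e, e⟫ = l
    rw [inner_add_left, real_inner_smul_left, real_inner_self_eq_norm_sq, he]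
    ring
  calc infDist x {z : Euc N | ⟪z, e⟫ = l}
      ≤ dist x (x + (l - ⟪x, e⟫) • e) := infDist_le_dist_of_mem hfoot
    _ = |⟪x, e⟫ - l| := by
      rw [dist_self_add_right, norm_smul, he, mul_one, Real.norm_eq_abs, abs_sub_comm]

/-- The gap is `k r - k ρ` for a point `ρ` of `(r, min R r₀)`. -/
lemma AntitoneOn.exists_pos_le_sub {k : ℝ → ℝ} (hanti : AntitoneOn k (Ioi 0)) {r₀ r R : ℝ}
    (hstrict : StrictAntiOn k (Ioo 0 r₀)) (hr : 0 < r) (hrr₀ : r < r₀) (hrR : r < R) :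
    ∃ m > 0, ∀ s t, 0 < s → s ≤ r → R ≤ t → m ≤ k s - k t := by
  set ρ := min R ((r + r₀) / 2)
  have hrρ : r < ρ := lt_min hrR (by linarith)
  have hρr₀ : ρ < r₀ := (min_le_right _ _).trans_lt (by linarith)
  have hρ : 0 < ρ := hr.trans hrρ
  refine ⟨k r - k ρ, sub_pos.2 (hstrict ⟨hr, hrr₀⟩ ⟨hρ, hρr₀⟩ hrρ), fun s t hs hsr hRt => ?_⟩
  have hρt : ρ ≤ t := (min_le_left _ _).trans hRt
  have hks : k r ≤ k s := hanti hs hr hsr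
  have hkt : k t ≤ k ρ := hanti hρ (hρ.trans_le hρt) hρt
  linarith

theorem kernel_reflection_inequalities_general (N : ℕ) (e : Euc N) (he : ‖e‖ = 1) (l : ℝ)
    (k : ℝ → ℝ) (hanti : AntitoneOn k (Set.Ioi 0))
    (r₀ : ℝ) (hstrict : StrictAntiOn k (Set.Ioo 0 r₀)) :
    (∀ x ∈ halfSp e l, ∀ y ∈ halfSp e l, x ≠ y →
      k (dist x (reflSp e l y)) ≤ k (dist x y)) ∧
    (∀ x ∈ halfSp e l, ∀ r : ℝ, 0 < r →
      r < min r₀ (Metric.infDist x {z : Euc N | ⟪z, e⟫ = l}) →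
      ∃ m > 0, ∀ᵐ y ∂(volume.restrict (Metric.ball x r)),
        m ≤ k (dist x y) - k (dist x (reflSp e l y))) := by
  refine ⟨fun x hx y hy hxy => ?_, fun x hx r hr hrlt => ?_⟩
  · have hd := dist_le_dist_reflSp he hx.le hy.le
    exact hanti (dist_pos.2 hxy) ((dist_pos.2 hxy).trans_le hd) hd
  · have hxl : 0 < ⟪x, e⟫ - l := sub_pos.2 hx
    have hra : r < ⟪x, e⟫ - l :=
      (lt_min_iff.1 hrlt).2.trans_le ((infDist_hyperplane_le he l x).trans (abs_of_pos hxl).le)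
    obtain ⟨m, hm, hgap⟩ :=
      hanti.exists_pos_le_sub hstrict hr (lt_min_iff.1 hrlt).1 (R := 2 * (⟪x, e⟫ - l) - r)
        (by linarith)
    -- `volume` on `Euc N` has no atoms only for `N ≠ 0`
    have : Nontrivial (Euc N) := ⟨⟨e, 0, fun h => by simp [h] at he⟩⟩
    refine ⟨m, hm, ?_⟩
    filter_upwards [Measure.ae_ne _ x, ae_restrict_mem measurableSet_ball] with y hyx hy
    have hxy : dist x y < r := by rwa [dist_comm, ← mem_ball]
    exact hgap _ _ (dist_pos.2 hyx.symm) hxy.le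
      (by linarith [two_mul_sub_dist_le_dist_reflSp he hx.le y])

theorem kernel_reflection_inequalities (N : ℕ) (e : Euc N) (he : ‖e‖ = 1) (l : ℝ)
    (k : ℝ → ℝ) (hknn : ∀ r : ℝ, 0 < r → 0 ≤ k r) (hanti : AntitoneOn k (Set.Ioi 0))
    (r₀ : ℝ) (hr₀ : 0 < r₀) (hstrict : StrictAntiOn k (Set.Ioo 0 r₀)) :
    (∀ x ∈ halfSp e l, ∀ y ∈ halfSp e l, x ≠ y →
      k (dist x (reflSp e l y)) ≤ k (dist x y)) ∧
    (∀ x ∈ halfSp e l, ∀ r : ℝ, 0 < r →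
      r < min r₀ (Metric.infDist x {z : Euc N | ⟪z, e⟫ = l}) →
      ∃ m > 0, ∀ᵐ y ∂(volume.restrict (Metric.ball x r)),
        m ≤ k (dist x y) - k (dist x (reflSp e l y))) :=
  kernel_reflection_inequalities_general N e he l k hanti r₀ hstrict
end
end

section
/- Assume k : (0,∞) → [0,∞) satisfies condition (k), let Ω ⊂ ℝ^N be an open radial set, and let f : [0,∞) × ℝ → ℝ satisfy (F1). Let u ∈ D^J(Ω) be a bounded weak solution of Iu = f(|x|,u) in Ω, u ≡ 0 on ℝ^N∖Ω, with u(x) → 0 as |x| → ∞. Then for every open affine half-space H with 0 ∈ ∂H, the function v := u∘Q_H − u is an antisymmetric supersolution of Iv = c(x)v in U := Ω∩H, v ≡ 0 on H∖U, where c ∈ L^∞(U) is given by c(x) = (f(|x|,u(Q_H(x))) − f(|x|,u(x)))/v(x) if v(x) ≠ 0 and c(x) = 0 if v(x) = 0. -/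
open MeasureTheory Metric Set Filter
open scoped ENNReal RealInnerProductSpace

noncomputable section

variable {N : ℕ}

/-!
Let `T` be the reflection in `∂H`. As `Ω` is radial, `T` maps `Ω` onto itself; it also preserves
`|x|`, Lebesgue measure and `|x - y|`, so `J(u ∘ T, φ) = J(u, φ ∘ T⁻¹)` and `φ ∘ T⁻¹` is again a
test function on `Ω`. Testing the equation of `u` with `φ` and with `φ ∘ T⁻¹` and subtracting gives
`J(v, φ) = ∫_Ω (f(|x|, u(Tx)) - f(|x|, u(x))) φ = ∫_U c v φ` for test functions on `U`, so `v` is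
even a solution. By (F1), `c` is bounded by the Lipschitz constant of `f` on the range of `u`; the
other conditions are inherited from `u ∈ D^J(Ω)` (with `U' = ℝ^N`) and from `u → 0` at infinity.
Since `f` is not assumed measurable, measurability of `c` is extracted from the weak formulation by
testing with Lipschitz bumps, whose energy is finite because `∫ min{1, r²} k(r) r^{N-1} dr < ∞`.
-/

section Reflection

variable {e : Euc N}

lemma inner_reflSp_zero (he : ‖e‖ = 1) (x : Euc N) : ⟪reflSp e 0 x, e⟫ = -⟪x, e⟫ := by
  rw [reflSp, inner_add_left, real_inner_smul_left, real_inner_self_eq_norm_sq, he]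
  ring

lemma reflSp_zero_involutive (he : ‖e‖ = 1) : Function.Involutive (reflSp e 0 : Euc N → Euc N) := by
  intro x
  rw [reflSp, inner_reflSp_zero he, reflSp]
  module

lemma norm_reflSp_zero (he : ‖e‖ = 1) (x : Euc N) : ‖reflSp e 0 x‖ = ‖x‖ := by
  rw [← sq_eq_sq₀ (norm_nonneg _) (norm_nonneg _), reflSp, norm_add_sq_real, norm_smul,
    real_inner_smul_right, he, Real.norm_eq_abs, mul_one, sq_abs]
  ring

def reflSpLinearIsometryEquiv (e : Euc N) (he : ‖e‖ = 1) : Euc N ≃ₗᵢ[ℝ] Euc N where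
  toFun := reflSp e 0
  invFun := reflSp e 0
  map_add' x y := by simp only [reflSp, inner_add_left]; module
  map_smul' c x := by simp only [reflSp, real_inner_smul_left, RingHom.id_apply]; module
  left_inv := reflSp_zero_involutive he
  right_inv := reflSp_zero_involutive he
  norm_map' := norm_reflSp_zero he

@[simp] lemma coe_reflSpLinearIsometryEquiv (he : ‖e‖ = 1) :
    ⇑(reflSpLinearIsometryEquiv e he) = reflSp e 0 :=
  rfl

end Reflection

lemma IsRadialSet.preimage_linearIsometryEquiv {Ω : Set (Euc N)} (hΩ : IsRadialSet Ω)
    (T : Euc N ≃ₗᵢ[ℝ] Euc N) : T ⁻¹' Ω = Ω :=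
  Set.ext fun x => hΩ (T x) x (T.norm_map x)

lemma LinearIsometryEquiv.measurePreserving_restrict (T : Euc N ≃ₗᵢ[ℝ] Euc N) {Ω : Set (Euc N)}
    (hΩ : T ⁻¹' Ω = Ω) : MeasurePreserving T (volume.restrict Ω) (volume.restrict Ω) := by
  simpa only [hΩ] using
    T.measurePreserving.restrict_preimage_emb T.toHomeomorph.measurableEmbedding Ω

section IndicatorKernel

variable {k : ℝ → ℝ}

-- `k` is only controlled on `(0, ∞)`; as every integrand below vanishes on the diagonal, `k` may be
-- replaced by `(Ioi 0).indicator k`, which is measurable.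
lemma measurable_indicator_Ioi_of_antitoneOn (hk : AntitoneOn k (Ioi 0)) :
    Measurable ((Ioi (0 : ℝ)).indicator k) := by
  refine measurable_of_restrict_of_restrict_compl (measurableSet_Ioi (a := 0)) ?_ ?_
  · rw [show (Ioi 0).domRestrict ((Ioi (0 : ℝ)).indicator k) = (Ioi 0).domRestrict k from
      funext fun x => indicator_of_mem x.2 k]
    exact Antitone.measurable fun a b hab => hk a.2 b.2 hab
  · rw [show (Ioi 0)ᶜ.domRestrict ((Ioi (0 : ℝ)).indicator k) = 0 from
      funext fun x => indicator_of_notMem x.2 k]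
    exact measurable_const

lemma mul_indicator_Ioi_dist (k : ℝ → ℝ) {x y : Euc N} {a : ℝ} (ha : x = y → a = 0) :
    a * (Ioi 0).indicator k (dist x y) = a * k (dist x y) := by
  rcases eq_or_ne x y with rfl | hxy
  · simp [ha rfl]
  · rw [indicator_of_mem (show dist x y ∈ Ioi 0 from dist_pos.2 hxy)]

lemma jEnergy_indicator_Ioi (k : ℝ → ℝ) (v : Euc N → ℝ) :
    jEnergy ((Ioi 0).indicator k) v = jEnergy k v := by
  refine congrArg _ (lintegral_congr fun x => lintegral_congr fun y => ?_)
  rw [mul_indicator_Ioi_dist k fun h => by simp [h]]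

lemma jForm_indicator_Ioi (k : ℝ → ℝ) (v w : Euc N → ℝ) :
    jForm ((Ioi 0).indicator k) v w = jForm k v w := by
  refine congrArg _ (integral_congr_ae (.of_forall fun x => integral_congr_ae
    (.of_forall fun y => ?_)))
  exact mul_indicator_Ioi_dist k fun h => by simp [h]

lemma rhoE_indicator_Ioi (k : ℝ → ℝ) (U : Set (Euc N)) (v : Euc N → ℝ) :
    rhoE ((Ioi 0).indicator k) U v = rhoE k U v := by
  refine lintegral_congr fun x => lintegral_congr fun y => ?_
  rw [mul_indicator_Ioi_dist k fun h => by simp [h]]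

lemma isWeakSol_indicator_Ioi {Ω : Set (Euc N)} {f : ℝ → ℝ → ℝ} {u : Euc N → ℝ} :
    IsWeakSol ((Ioi 0).indicator k) Ω f u ↔ IsWeakSol k Ω f u := by
  simp only [IsWeakSol, memDJ, jEnergy_indicator_Ioi, jForm_indicator_Ioi]

lemma antiSuperSol_indicator_Ioi {e : Euc N} {l : ℝ} {U : Set (Euc N)} {c v : Euc N → ℝ} :
    AntiSuperSol ((Ioi 0).indicator k) e l U c v ↔ AntiSuperSol k e l U c v := by
  simp only [AntiSuperSol, memVJ, memDJ, rhoE_indicator_Ioi, jEnergy_indicator_Ioi,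
    jForm_indicator_Ioi]

lemma KCond.integrable_min_one_sq_mul_indicator [Nontrivial (Euc N)] (hk : KCond N k) :
    Integrable fun z : Euc N => min 1 (‖z‖ ^ 2) * (Ioi 0).indicator k ‖z‖ := by
  rw [integrable_fun_norm_addHaar volume (f := fun r => min 1 (r ^ 2) * (Ioi 0).indicator k r),
    finrank_euclideanSpace_fin]
  refine (integrableOn_congr_fun (fun r (hr : 0 < r) => ?_) measurableSet_Ioi).2 hk.2.2.2.1
  simp only [smul_eq_mul, indicator_of_mem (show r ∈ Ioi 0 from hr)]
  ring

end IndicatorKernel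

section Energy

variable {K : ℝ → ℝ} {v w : Euc N → ℝ}

lemma aemeasurable_sq_sub_mul_kernel (hK : Measurable K) (hv : AEMeasurable v) :
    AEMeasurable (fun p : Euc N × Euc N => (v p.1 - v p.2) ^ 2 * K (dist p.1 p.2))
      (volume.prod volume) :=
  ((hv.comp_fst.sub hv.comp_snd).pow_const 2).mul (hK.comp measurable_dist).aemeasurable

lemma jEnergy_eq_lintegral_prod (hK : Measurable K) (hv : AEMeasurable v) :
    jEnergy K v = 1 / 2 * ∫⁻ p : Euc N × Euc N,
      ENNReal.ofReal ((v p.1 - v p.2) ^ 2 * K (dist p.1 p.2)) ∂(volume.prod volume) := by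
  rw [lintegral_prod _ (aemeasurable_sq_sub_mul_kernel hK hv).ennreal_ofReal]
  rfl

lemma jEnergy_sub_le (hK : Measurable K) (hK0 : ∀ r, 0 ≤ K r) (hv : AEMeasurable v)
    (hw : AEMeasurable w) :
    jEnergy K (fun x => v x - w x) ≤ 2 * jEnergy K v + 2 * jEnergy K w := by
  rw [jEnergy_eq_lintegral_prod hK (hv.sub hw : AEMeasurable fun x => v x - w x),
    jEnergy_eq_lintegral_prod hK hv, jEnergy_eq_lintegral_prod hK hw]
  have hpt : ∀ p : Euc N × Euc N,
      ENNReal.ofReal ((v p.1 - w p.1 - (v p.2 - w p.2)) ^ 2 * K (dist p.1 p.2)) ≤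
        ENNReal.ofReal (2 * ((v p.1 - v p.2) ^ 2 * K (dist p.1 p.2))) +
          ENNReal.ofReal (2 * ((w p.1 - w p.2) ^ 2 * K (dist p.1 p.2))) := by
    intro p
    have hk := hK0 (dist p.1 p.2)
    rw [← ENNReal.ofReal_add (by positivity) (by positivity)]
    exact ENNReal.ofReal_le_ofReal
      (by nlinarith [mul_nonneg (sq_nonneg (v p.1 - v p.2 + (w p.1 - w p.2))) hk])
  refine (mul_le_mul_right (lintegral_mono hpt) _).trans_eq ?_
  simp only [ENNReal.ofReal_mul zero_le_two, ENNReal.ofReal_ofNat]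
  rw [lintegral_add_left' ?_, lintegral_const_mul' _ _ (by simp),
    lintegral_const_mul' _ _ (by simp)]
  · ring
  · exact ((aemeasurable_sq_sub_mul_kernel hK hv).ennreal_ofReal).const_mul 2

lemma jEnergy_comp_linearIsometryEquiv (K : ℝ → ℝ) (T : Euc N ≃ₗᵢ[ℝ] Euc N) (v : Euc N → ℝ) :
    jEnergy K (fun x => v (T x)) = jEnergy K v := by
  have hT := T.measurePreserving
  have hTe := T.toHomeomorph.measurableEmbedding
  unfold jEnergy
  congr 1
  calc ∫⁻ x, ∫⁻ y, ENNReal.ofReal ((v (T x) - v (T y)) ^ 2 * K (dist x y))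
      = ∫⁻ x, ∫⁻ y, ENNReal.ofReal ((v (T x) - v (T y)) ^ 2 * K (dist (T x) (T y))) := by
        simp_rw [T.dist_map]
    _ = ∫⁻ x, ∫⁻ y, ENNReal.ofReal ((v x - v (T y)) ^ 2 * K (dist x (T y))) :=
        hT.lintegral_comp_emb hTe fun x =>
          ∫⁻ y, ENNReal.ofReal ((v x - v (T y)) ^ 2 * K (dist x (T y)))
    _ = ∫⁻ x, ∫⁻ y, ENNReal.ofReal ((v x - v y) ^ 2 * K (dist x y)) :=
        lintegral_congr fun x =>
          hT.lintegral_comp_emb hTe fun y => ENNReal.ofReal ((v x - v y) ^ 2 * K (dist x y))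

lemma rhoE_univ (k : ℝ → ℝ) (v : Euc N → ℝ) : rhoE k univ v = 2 * jEnergy k v := by
  simp [rhoE, jEnergy, ← mul_assoc, ENNReal.mul_inv_cancel]

end Energy

section BilinearForm

variable {K : ℝ → ℝ} {v w : Euc N → ℝ}

lemma lintegral_prod_lt_top_of_jEnergy_lt_top (hK : Measurable K) (hv : AEMeasurable v)
    (h : jEnergy K v < ⊤) :
    ∫⁻ p : Euc N × Euc N, ENNReal.ofReal ((v p.1 - v p.2) ^ 2 * K (dist p.1 p.2))
      ∂(volume.prod volume) < ⊤ := by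
  rw [jEnergy_eq_lintegral_prod hK hv] at h
  exact ENNReal.lt_top_of_mul_ne_top_right h.ne (by simp)

lemma integrable_sub_mul_sub_mul_kernel (hK : Measurable K) (hK0 : ∀ r, 0 ≤ K r)
    (hv : AEMeasurable v) (hw : AEMeasurable w) (hEv : jEnergy K v < ⊤)
    (hEw : jEnergy K w < ⊤) :
    Integrable (fun p : Euc N × Euc N => (v p.1 - v p.2) * (w p.1 - w p.2) * K (dist p.1 p.2))
      (volume.prod volume) := by
  refine ⟨(((hv.comp_fst.sub hv.comp_snd).mul (hw.comp_fst.sub hw.comp_snd)).mul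
    (hK.comp measurable_dist).aemeasurable).aestronglyMeasurable, ?_⟩
  rw [hasFiniteIntegral_iff_norm]
  have hpt : ∀ p : Euc N × Euc N,
      ENNReal.ofReal ‖(v p.1 - v p.2) * (w p.1 - w p.2) * K (dist p.1 p.2)‖ ≤
        ENNReal.ofReal ((v p.1 - v p.2) ^ 2 * K (dist p.1 p.2)) +
          ENNReal.ofReal ((w p.1 - w p.2) ^ 2 * K (dist p.1 p.2)) := by
    intro p
    have hk := hK0 (dist p.1 p.2)
    rw [← ENNReal.ofReal_add (by positivity) (by positivity), Real.norm_eq_abs, abs_mul,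
      abs_of_nonneg hk, abs_mul]
    refine ENNReal.ofReal_le_ofReal ?_
    nlinarith [mul_nonneg (sq_nonneg (|v p.1 - v p.2| - |w p.1 - w p.2|)) hk,
      sq_abs (v p.1 - v p.2), sq_abs (w p.1 - w p.2)]
  refine (lintegral_mono hpt).trans_lt ?_
  rw [lintegral_add_left' (aemeasurable_sq_sub_mul_kernel hK hv).ennreal_ofReal]
  exact ENNReal.add_lt_top.2 ⟨lintegral_prod_lt_top_of_jEnergy_lt_top hK hv hEv,
    lintegral_prod_lt_top_of_jEnergy_lt_top hK hw hEw⟩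

lemma jForm_eq_integral_prod
    (hint : Integrable (fun p : Euc N × Euc N =>
      (v p.1 - v p.2) * (w p.1 - w p.2) * K (dist p.1 p.2)) (volume.prod volume)) :
    jForm K v w = 1 / 2 * ∫ p : Euc N × Euc N,
      (v p.1 - v p.2) * (w p.1 - w p.2) * K (dist p.1 p.2) ∂(volume.prod volume) := by
  rw [integral_prod _ hint]
  rfl

lemma jForm_sub_left (hK : Measurable K) (hK0 : ∀ r, 0 ≤ K r) {v₁ v₂ : Euc N → ℝ}
    (hv₁ : AEMeasurable v₁) (hv₂ : AEMeasurable v₂) (hw : AEMeasurable w)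
    (hE₁ : jEnergy K v₁ < ⊤) (hE₂ : jEnergy K v₂ < ⊤) (hEw : jEnergy K w < ⊤) :
    jForm K (fun x => v₁ x - v₂ x) w = jForm K v₁ w - jForm K v₂ w := by
  have h₁ := integrable_sub_mul_sub_mul_kernel hK hK0 hv₁ hw hE₁ hEw
  have h₂ := integrable_sub_mul_sub_mul_kernel hK hK0 hv₂ hw hE₂ hEw
  have h := h₁.sub h₂
  rw [jForm_eq_integral_prod h₁, jForm_eq_integral_prod h₂, jForm_eq_integral_prod
    (h.congr (.of_forall fun p => by simp only [Pi.sub_apply]; ring)),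
    ← mul_sub, ← integral_sub h₁ h₂]
  congr 1
  exact integral_congr_ae (.of_forall fun p => by ring)

lemma jForm_comp_linearIsometryEquiv (K : ℝ → ℝ) (T : Euc N ≃ₗᵢ[ℝ] Euc N) (v w : Euc N → ℝ) :
    jForm K (fun x => v (T x)) w = jForm K v (fun x => w (T.symm x)) := by
  have hT := T.measurePreserving
  have hTe := T.toHomeomorph.measurableEmbedding
  unfold jForm
  congr 1
  calc ∫ x, ∫ y, (v (T x) - v (T y)) * (w x - w y) * K (dist x y)
      = ∫ x, ∫ y, (v (T x) - v (T y)) * (w (T.symm (T x)) - w (T.symm (T y))) *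
          K (dist (T x) (T y)) := by
        simp only [T.symm_apply_apply, T.dist_map]
    _ = ∫ x, ∫ y, (v x - v (T y)) * (w (T.symm x) - w (T.symm (T y))) * K (dist x (T y)) :=
        hT.integral_comp hTe fun x =>
          ∫ y, (v x - v (T y)) * (w (T.symm x) - w (T.symm (T y))) * K (dist x (T y))
    _ = ∫ x, ∫ y, (v x - v y) * (w (T.symm x) - w (T.symm y)) * K (dist x y) :=
        integral_congr_ae (.of_forall fun x => hT.integral_comp hTe fun y =>
          (v x - v y) * (w (T.symm x) - w (T.symm y)) * K (dist x y))

end BilinearForm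

section TestFunctions

variable {K : ℝ → ℝ} {Ω Ω' : Set (Euc N)} {u w φ : Euc N → ℝ}

lemma memDJ.mono {k : ℝ → ℝ} (h : memDJ k Ω φ) (hΩ : Ω ⊆ Ω') : memDJ k Ω' φ :=
  ⟨h.1, h.2.1, h.2.2.mono fun _ hx hxΩ => hx fun hx' => hxΩ (hΩ hx')⟩

lemma memDJ.comp_linearIsometryEquiv {k : ℝ → ℝ} (h : memDJ k Ω φ)
    {T : Euc N ≃ₗᵢ[ℝ] Euc N} (hΩ : T ⁻¹' Ω = Ω) : memDJ k Ω (fun x => φ (T x)) := by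
  refine ⟨h.1.comp_measurePreserving T.measurePreserving,
    (jEnergy_comp_linearIsometryEquiv k T φ).symm ▸ h.2.1, ?_⟩
  filter_upwards [T.measurePreserving.quasiMeasurePreserving.ae h.2.2] with x hx hxΩ
  exact hx fun hTx => hxΩ (hΩ ▸ hTx)

lemma memDJ.sub (hK : Measurable K) (hK0 : ∀ r, 0 ≤ K r) (hu : memDJ K Ω u)
    (hw : memDJ K Ω w) : memDJ K Ω (fun x => u x - w x) := by
  refine ⟨hu.1.sub hw.1, ?_, ?_⟩
  · refine (jEnergy_sub_le hK hK0 hu.1.aestronglyMeasurable.aemeasurable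
      hw.1.aestronglyMeasurable.aemeasurable).trans_lt ?_
    exact ENNReal.add_lt_top.2 ⟨ENNReal.mul_lt_top (by simp) hu.2.1,
      ENNReal.mul_lt_top (by simp) hw.2.1⟩
  · filter_upwards [hu.2.2, hw.2.2] with x hux hwx hxΩ
    rw [hux hxΩ, hwx hxΩ, sub_self]

lemma memDJ.memVJ_univ {k : ℝ → ℝ} (h : memDJ k Ω φ) : memVJ k univ φ :=
  ⟨⟨φ, 0, (add_zero φ).symm, h.1, MemLp.zero⟩,
    (rhoE_univ k φ).symm ▸ ENNReal.mul_lt_top (by simp) h.2.1⟩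

end TestFunctions

section Lipschitz

variable {K : ℝ → ℝ} {φ : Euc N → ℝ}

lemma sq_sub_le_four_mul_min (hφ : LipschitzWith 1 φ) (hφ1 : ∀ x, |φ x| ≤ 1) (x y : Euc N) :
    (φ x - φ y) ^ 2 ≤ 4 * min 1 (‖x - y‖ ^ 2) := by
  have hd : |φ x - φ y| ≤ ‖x - y‖ := by
    simpa [Real.dist_eq, dist_eq_norm] using hφ.dist_le_mul x y
  have h2 : |φ x - φ y| ≤ 2 := (abs_sub _ _).trans (by linarith [hφ1 x, hφ1 y])
  rw [← sq_abs]
  rcases le_total 1 (‖x - y‖ ^ 2) with h | h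
  · rw [min_eq_left h]; nlinarith [abs_nonneg (φ x - φ y)]
  · rw [min_eq_right h]; nlinarith [abs_nonneg (φ x - φ y)]

lemma lintegral_lintegral_indicator_add_mul_sub {G : Euc N → ℝ≥0∞} (hG : Measurable G)
    (hG_neg : ∀ z, G (-z) = G z) {s : Set (Euc N)} (hs : MeasurableSet s) :
    ∫⁻ x, ∫⁻ y, (s.indicator 1 x + s.indicator 1 y) * G (x - y) =
      2 * (volume s * ∫⁻ z, G z) := by
  set χ : Euc N → ℝ≥0∞ := s.indicator 1
  have hχ : Measurable χ := measurable_one.indicator hs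
  have hGx : ∀ x, Measurable fun y => G (x - y) := fun x =>
    hG.comp (measurable_const.sub measurable_id)
  have hGy : ∀ y, Measurable fun x => G (x - y) := fun y => hG.comp (measurable_sub_const y)
  have hGx_int : ∀ x, ∫⁻ y, G (x - y) = ∫⁻ z, G z := fun x => by
    simp_rw [← hG_neg (x - _), neg_sub]
    exact lintegral_sub_right_eq_self G x
  have hswap : ∫⁻ x, ∫⁻ y, χ y * G (x - y) = ∫⁻ y, χ y * ∫⁻ z, G z := by
    rw [lintegral_lintegral_swap ((hχ.comp measurable_snd).mul
      (hG.comp measurable_sub)).aemeasurable]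
    refine lintegral_congr fun y => ?_
    rw [lintegral_const_mul _ (hGy y), lintegral_sub_right_eq_self G y]
  calc ∫⁻ x, ∫⁻ y, (χ x + χ y) * G (x - y)
      = ∫⁻ x, ((χ x * ∫⁻ z, G z) + ∫⁻ y, χ y * G (x - y)) := by
        refine lintegral_congr fun x => ?_
        simp_rw [add_mul]
        rw [lintegral_add_left ((hGx x).const_mul _), lintegral_const_mul _ (hGx x), hGx_int]
    _ = _ := by
        rw [lintegral_add_left (hχ.mul_const _), hswap, lintegral_mul_const _ hχ,
          lintegral_indicator_one hs]
        ring

lemma jEnergy_lt_top_of_lipschitzWith (hK : Measurable K) (hK0 : ∀ r, 0 ≤ K r)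
    (hKint : Integrable fun z : Euc N => min 1 (‖z‖ ^ 2) * K ‖z‖)
    (hφ : LipschitzWith 1 φ) (hφ1 : ∀ x, |φ x| ≤ 1) {R : ℝ}
    (hR : ∀ x, R ≤ ‖x‖ → φ x = 0) : jEnergy K φ < ⊤ := by
  set G : Euc N → ℝ≥0∞ := fun z => ENNReal.ofReal (4 * (min 1 (‖z‖ ^ 2) * K ‖z‖))
  set χ : Euc N → ℝ≥0∞ := (ball (0 : Euc N) R).indicator 1
  have hG : ∀ x y, ENNReal.ofReal ((φ x - φ y) ^ 2 * K (dist x y)) ≤ G (x - y) := by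
    intro x y
    rw [dist_eq_norm]
    refine ENNReal.ofReal_le_ofReal ?_
    rw [← mul_assoc]
    exact mul_le_mul_of_nonneg_right (sq_sub_le_four_mul_min hφ hφ1 x y) (hK0 _)
  have hpt : ∀ x y, ENNReal.ofReal ((φ x - φ y) ^ 2 * K (dist x y)) ≤
      (χ x + χ y) * G (x - y) := by
    intro x y
    by_cases hxy : ‖x‖ < R ∨ ‖y‖ < R
    · refine (hG x y).trans (le_mul_of_one_le_left' ?_)
      rcases hxy with h | h
      · exact (le_of_eq (by simp [χ, h])).trans le_self_add
      · exact (le_of_eq (by simp [χ, h])).trans le_add_self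
    · push Not at hxy
      simp [hR x hxy.1, hR y hxy.2]
  calc jEnergy K φ ≤ 1 / 2 * ∫⁻ x, ∫⁻ y, (χ x + χ y) * G (x - y) :=
        mul_le_mul_right (lintegral_mono fun x => lintegral_mono fun y => hpt x y) _
    _ < ⊤ := by
        rw [lintegral_lintegral_indicator_add_mul_sub (by fun_prop) (by simp [G])
          measurableSet_ball]
        exact ENNReal.mul_lt_top (by simp) (ENNReal.mul_lt_top (by simp)
          (ENNReal.mul_lt_top measure_ball_lt_top (hKint.const_mul 4).lintegral_lt_top))

end Lipschitz

section WeakSolution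

variable {K : ℝ → ℝ} {Ω : Set (Euc N)} {f : ℝ → ℝ → ℝ} {u φ : Euc N → ℝ}

lemma exists_memDJ_ne_zero [Nontrivial (Euc N)] (hK : Measurable K) (hK0 : ∀ r, 0 ≤ K r)
    (hKint : Integrable fun z : Euc N => min 1 (‖z‖ ^ 2) * K ‖z‖) {S : Set (Euc N)}
    (hS : IsOpen S) (hSb : Bornology.IsBounded S) :
    ∃ φ : Euc N → ℝ, memDJ K S φ ∧ HasCompactSupport φ ∧ Continuous φ ∧ ∀ x ∈ S, φ x ≠ 0 := by
  obtain ⟨R, hR⟩ := hSb.subset_ball 0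
  have hSc : Sᶜ.Nonempty := by
    by_contra h
    rw [not_nonempty_iff_eq_empty, compl_empty_iff] at h
    exact NormedSpace.unbounded_univ ℝ (Euc N) (h ▸ hSb)
  set φ : Euc N → ℝ := fun x => min (infDist x Sᶜ) 1
  have hφ : LipschitzWith 1 φ := (lipschitz_infDist_pt Sᶜ).min_const 1
  have hφ0 : ∀ x ∉ S, φ x = 0 := fun x hx => by
    simp [φ, infDist_zero_of_mem (mem_compl hx)]
  have hφc : HasCompactSupport φ := HasCompactSupport.intro (isCompact_closedBall 0 R)
    fun x hx => hφ0 x fun hxS => hx (ball_subset_closedBall (hR hxS))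
  refine ⟨φ, ⟨hφ.continuous.memLp_of_hasCompactSupport hφc,
    jEnergy_lt_top_of_lipschitzWith hK hK0 hKint hφ
      (fun x => abs_le.2 ⟨by linarith [le_min (infDist_nonneg (x := x) (s := Sᶜ)) zero_le_one],
        min_le_right _ _⟩)
      (R := R) fun x hx => hφ0 x fun hxS => (mem_ball_zero_iff.1 (hR hxS)).not_ge hx,
    .of_forall hφ0⟩, hφc, hφ.continuous, fun x hx => ?_⟩
  refine (lt_min ?_ one_pos).ne'
  exact (hS.isClosed_compl.notMem_iff_infDist_pos hSc).1 (not_not.2 hx)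

lemma IsWeakSol.aestronglyMeasurable_restrict [Nontrivial (Euc N)] (hK : Measurable K)
    (hK0 : ∀ r, 0 ≤ K r) (hKint : Integrable fun z : Euc N => min 1 (‖z‖ ^ 2) * K ‖z‖)
    (hΩ : IsOpen Ω) (hu : IsWeakSol K Ω f u) :
    AEStronglyMeasurable (fun x => f ‖x‖ (u x)) (volume.restrict Ω) := by
  rw [← inter_univ Ω, ← iUnion_ball_nat 0, inter_iUnion, aestronglyMeasurable_iUnion_iff]
  intro n
  obtain ⟨φ, hφ, hφc, hφcont, hφ0⟩ := exists_memDJ_ne_zero hK hK0 hKint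
    (hΩ.inter isOpen_ball) (isBounded_ball.subset inter_subset_right)
  have hint := (hu.2 φ (hφ.mono inter_subset_left) hφc).1
  refine ((hint.mono_set inter_subset_left).aestronglyMeasurable.aemeasurable.div
    hφcont.aemeasurable).aestronglyMeasurable.congr ?_
  filter_upwards [self_mem_ae_restrict (hΩ.inter isOpen_ball).measurableSet] with x hx
  exact mul_div_cancel_right₀ _ (hφ0 x hx)

lemma IsWeakSol.jForm_sub_comp_eq (hK : Measurable K) (hK0 : ∀ r, 0 ≤ K r)
    (hΩm : MeasurableSet Ω) (hu : IsWeakSol K Ω f u) {T : Euc N ≃ₗᵢ[ℝ] Euc N}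
    (hΩ : T ⁻¹' Ω = Ω) {U : Set (Euc N)} (hU : U ⊆ Ω) (hφ : memDJ K U φ)
    (hφc : HasCompactSupport φ) :
    jForm K (fun x => u (T x) - u x) φ = ∫ x in U, (f ‖x‖ (u (T x)) - f ‖x‖ (u x)) * φ x := by
  have hΩ' : T.symm ⁻¹' Ω = Ω := by
    conv_lhs => rw [← hΩ]
    ext x; simp
  have hTe := T.toHomeomorph.measurableEmbedding
  have hTΩ := T.measurePreserving_restrict hΩ
  have huT := hu.1.comp_linearIsometryEquiv hΩ
  have hφΩ := hφ.mono hU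
  obtain ⟨hint, heq⟩ := hu.2 φ hφΩ hφc
  obtain ⟨hintT, heqT⟩ := hu.2 _ (hφΩ.comp_linearIsometryEquiv hΩ')
    (hφc.comp_homeomorph T.symm.toHomeomorph)
  rw [← setIntegral_eq_of_subset_of_ae_sdiff_eq_zero hΩm.nullMeasurableSet hU,
    jForm_sub_left hK hK0 huT.1.aestronglyMeasurable.aemeasurable
      hu.1.1.aestronglyMeasurable.aemeasurable hφΩ.1.aestronglyMeasurable.aemeasurable
      huT.2.1 hu.1.2.1 hφ.2.1,
    jForm_comp_linearIsometryEquiv, heqT, heq, ← hTΩ.integral_comp hTe, ← integral_sub]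
  · exact integral_congr_ae (.of_forall fun x => by simp [T.norm_map, sub_mul])
  · exact (hTΩ.integrable_comp_emb hTe).2 hintT
  · exact hint
  · filter_upwards [hφ.2.2] with x hx hxΩ
    simp [hx hxΩ.2]

end WeakSolution

lemma CondF1.abs_div_sub_le {f : ℝ → ℝ → ℝ} (hf : CondF1 f) (M : ℝ) :
    ∃ L, 0 ≤ L ∧ ∀ r, 0 ≤ r → ∀ a b, |a| ≤ M → |b| ≤ M → |(f r a - f r b) / (a - b)| ≤ L := by
  obtain ⟨L, hL, hLip⟩ := hf (max M 1) (by positivity)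
  refine ⟨L, hL.le, fun r hr a b ha hb => ?_⟩
  rw [abs_div]
  exact div_le_of_le_mul₀ (abs_nonneg _) hL.le (hLip r hr a
    (abs_le.1 (ha.trans (le_max_left _ _))) b (abs_le.1 (hb.trans (le_max_left _ _))))

lemma memLp_top_div_sub_comp {Ω : Set (Euc N)} {f : ℝ → ℝ → ℝ} {u : Euc N → ℝ}
    (hF : AEStronglyMeasurable (fun x => f ‖x‖ (u x)) (volume.restrict Ω))
    (hu : AEMeasurable u) (hf : CondF1 f) (hb : IsBoundedFun u)
    {T : Euc N ≃ₗᵢ[ℝ] Euc N} (hΩ : T ⁻¹' Ω = Ω) :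
    MemLp (fun x => (f ‖x‖ (u (T x)) - f ‖x‖ (u x)) / (u (T x) - u x)) ⊤ (volume.restrict Ω) := by
  obtain ⟨M, hM⟩ := hb
  obtain ⟨L, -, hL⟩ := hf.abs_div_sub_le M
  have hFT : AEStronglyMeasurable (fun x => f ‖x‖ (u (T x))) (volume.restrict Ω) := by
    simpa only [Function.comp_def, T.norm_map] using
      hF.comp_measurePreserving (T.measurePreserving_restrict hΩ)
  refine memLp_top_of_bound (((hFT.sub hF).aemeasurable.div ?_).aestronglyMeasurable) L
    (.of_forall fun x => hL ‖x‖ (norm_nonneg x) _ _ (hM _) (hM x))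
  exact ((hu.comp_quasiMeasurePreserving T.measurePreserving.quasiMeasurePreserving).sub
    hu).restrict

lemma exists_forall_neg_le_of_tendsto_cocompact {v : Euc N → ℝ}
    (hv : Tendsto v (cocompact (Euc N)) (nhds 0)) {ε : ℝ} (hε : 0 < ε) :
    ∃ R : ℝ, ∀ x, R ≤ ‖x‖ → -ε ≤ v x := by
  rw [← Metric.cobounded_eq_cocompact] at hv
  obtain ⟨R, -, hR⟩ := hasBasis_cobounded_norm.eventually_iff.1
    (hv.eventually (Ioi_mem_nhds (neg_lt_zero.2 hε)))
  exact ⟨R, fun x hx => (hR hx).le⟩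

theorem reflection_difference_is_antisym_supersol (N : ℕ) (k : ℝ → ℝ) (hk : KCond N k)
    (Ω : Set (Euc N)) (hΩo : IsOpen Ω) (hΩr : IsRadialSet Ω)
    (f : ℝ → ℝ → ℝ) (hf1 : CondF1 f)
    (u : Euc N → ℝ) (hu : IsWeakSol k Ω f u) (hbdd : IsBoundedFun u)
    (hU2 : Tendsto u (cocompact (Euc N)) (nhds 0))
    (e : Euc N) (he : ‖e‖ = 1)
    (v : Euc N → ℝ) (hv : v = fun x => u (reflSp e 0 x) - u x)
    (c : Euc N → ℝ)
    (hc : c = fun x => if v x = 0 then 0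
      else (f ‖x‖ (u (reflSp e 0 x)) - f ‖x‖ (u x)) / v x) :
    MemLp c ⊤ (volume.restrict (Ω ∩ halfSp e 0)) ∧
    AntiSuperSol k e 0 (Ω ∩ halfSp e 0) c v := by
  have : Nontrivial (Euc N) := nontrivial_of_ne e 0 (by rintro rfl; simp at he)
  have hKm := measurable_indicator_Ioi_of_antitoneOn hk.2.1
  have hK0 : ∀ r, 0 ≤ (Ioi 0).indicator k r := indicator_nonneg hk.1
  rw [← isWeakSol_indicator_Ioi] at hu
  rw [← antiSuperSol_indicator_Ioi]
  set T := reflSpLinearIsometryEquiv e he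
  have hΩT : T ⁻¹' Ω = Ω := hΩr.preimage_linearIsometryEquiv T
  replace hv : v = fun x => u (T x) - u x := hv
  -- since `a / 0 = 0`, the case distinction in `c` disappears
  replace hc : c = fun x => (f ‖x‖ (u (T x)) - f ‖x‖ (u x)) / (u (T x) - u x) := by
    rw [hc, hv]; ext x; simp only [T, coe_reflSpLinearIsometryEquiv]
    split_ifs with h <;> simp [h]
  have hvDJ : memDJ _ Ω v := hv ▸ (hu.1.comp_linearIsometryEquiv hΩT).sub hKm hK0 hu.1
  have hvlim : Tendsto v (cocompact (Euc N)) (nhds 0) := by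
    simpa [hv] using (hU2.comp T.toHomeomorph.isClosedEmbedding.tendsto_cocompact).sub hU2
  refine ⟨?_, fun x => ?_, ⟨univ, isOpen_univ, image_univ_of_surjective T.surjective,
    subset_univ _, hvDJ.memVJ_univ⟩, ?_, fun ε hε => ?_, fun φ hφ hφc _ => ?_⟩
  · exact hc ▸ (memLp_top_div_sub_comp (hu.aestronglyMeasurable_restrict hKm hK0
      hk.integrable_min_one_sq_mul_indicator hΩo) hu.1.1.aestronglyMeasurable.aemeasurable
      hf1 hbdd hΩT).mono_measure (Measure.restrict_mono inter_subset_left le_rfl)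
  · simp [hv, T, reflSp_zero_involutive he x]
  · filter_upwards [hvDJ.2.2] with x hx hxH
    exact (hx fun hxΩ => hxH.2 ⟨hxΩ, hxH.1⟩).ge
  · exact (exists_forall_neg_le_of_tendsto_cocompact hvlim hε).imp fun R hR x _ => hR x
  · rw [hv, hu.jForm_sub_comp_eq hKm hK0 hΩo.measurableSet hΩT inter_subset_left hφ hφc]
    refine le_of_eq (integral_congr_ae (.of_forall fun x => ?_))
    simp only [hc]
    rw [div_mul_cancel_of_imp fun h => by rw [sub_eq_zero.1 h, sub_self]]
end
end
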